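/- arXiv:2006.10890 — 11 statements merged into one kernel-verified Lean document; each statement's English description precedes it below -/
import Mathlib

section
/- Let D be a small category and Φ : D ⥤ Cat a functor with a colimit cocone (K_d : Φ d ⥤ 𝒦)_{d ∈ D} in Cat (so 𝒦 together with the functors K_d is a colimit of Φ, and for every u : d → e one has Φ u ⋙ K_e = K_d). Let 𝒳 be a cocomplete category and X : 𝒦 ⥤ 𝒳 a functor. Then the colimit of X is isomorphic to the colimit of the D-shaped diagram in 𝒳 whose value at d is colim (K_d ⋙ X) and whose value at u : d → e is the canonical morphism colim (K_d ⋙ X) → colim (K_e ⋙ X) obtained by restricting the colimit cocone of K_e ⋙ X along Φ u (using Φ u ⋙ K_e = K_d): colim_𝒦 X ≅ colim_{d∈D} colim_{Φ d} (K_d ⋙ X). -/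
open CategoryTheory CategoryTheory.Limits

universe v u

universe u₂ v₂

namespace ColimDecompAux

section Ov
variable {𝒳 : Type u} [Category.{v} 𝒳]

structure Ov (Y : 𝒳) : Type max u v where
  dom : 𝒳
  arr : dom ⟶ Y

variable {Y : 𝒳}

instance : Category.{v} (Ov Y) where
  Hom A B := { f : A.dom ⟶ B.dom // f ≫ B.arr = A.arr }
  id A := ⟨𝟙 _, Category.id_comp _⟩
  comp f g := ⟨f.1 ≫ g.1, by rw [Category.assoc, g.2, f.2]⟩

@[simp] lemma Ov.id_val (A : Ov Y) : (𝟙 A : A ⟶ A).1 = 𝟙 A.dom := rfl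

@[simp] lemma Ov.comp_val {A B C : Ov Y} (f : A ⟶ B) (g : B ⟶ C) :
    (f ≫ g).1 = f.1 ≫ g.1 := rfl

lemma Ov.hom_ext {A B : Ov Y} {f g : A ⟶ B} (h : f.1 = g.1) : f = g := Subtype.ext h

@[simp] lemma Ov.eqToHom_val {A B : Ov Y} (h : A = B) :
    (eqToHom h).1 = eqToHom (congrArg Ov.dom h) := by cases h; rfl

lemma Ov.obj_ext {A B : Ov Y} (h : A.dom = B.dom) (h2 : A.arr = eqToHom h ≫ B.arr) : A = B := by
  cases A; cases B
  dsimp at h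
  subst h
  simp only [eqToHom_refl, Category.id_comp] at h2
  rw [h2]

lemma Ov.hom_hext {A B A' B' : Ov Y} (hA : A = A') (hB : B = B') {f : A ⟶ B} {g : A' ⟶ B'}
    (h : HEq f.1 g.1) : HEq f g := by
  subst hA; subst hB; exact heq_of_eq (Ov.hom_ext (eq_of_heq h))

lemma Ov.arr_eq {A B : Ov Y} (h : A = B) :
    A.arr = eqToHom (congrArg Ov.dom h) ≫ B.arr := by cases h; simp

abbrev OvForget (Y : 𝒳) : Ov Y ⥤ 𝒳 where
  obj A := A.dom
  map f := f.1

end Ov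

section EqCat

variable {V : Type v} [SmallCategory V] {𝒵 : Type u₂} [Category.{v₂} 𝒵]

structure EqCat (P Q : V ⥤ 𝒵) : Type v where
  pt : V
  eq : P.obj pt = Q.obj pt

variable {P Q : V ⥤ 𝒵}

instance : SmallCategory (EqCat P Q) where
  Hom a b := { f : a.pt ⟶ b.pt // P.map f = eqToHom a.eq ≫ Q.map f ≫ eqToHom b.eq.symm }
  id a := ⟨𝟙 _, by simp⟩
  comp f g := ⟨f.1 ≫ g.1, by rw [P.map_comp, f.2, g.2]; simp⟩

@[simp] lemma EqCat.id_val (a : EqCat P Q) : (𝟙 a : a ⟶ a).1 = 𝟙 a.pt := rfl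

@[simp] lemma EqCat.comp_val {a b c' : EqCat P Q} (f : a ⟶ b) (g : b ⟶ c') :
    (f ≫ g).1 = f.1 ≫ g.1 := rfl

lemma EqCat.hom_ext {a b : EqCat P Q} {f g : a ⟶ b} (h : f.1 = g.1) : f = g := Subtype.ext h

lemma EqCat.obj_ext {a b : EqCat P Q} (h : a.pt = b.pt) : a = b := by
  cases a; cases b; dsimp at h; subst h; rfl

lemma EqCat.hom_hext {a b a' b' : EqCat P Q} (ha : a = a') (hb : b = b')
    {f : a ⟶ b} {g : a' ⟶ b'} (h : HEq f.1 g.1) : HEq f g := by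
  subst ha; subst hb; exact heq_of_eq (EqCat.hom_ext (eq_of_heq h))

abbrev EqCat.incl (P Q : V ⥤ 𝒵) : EqCat P Q ⥤ V where
  obj a := a.pt
  map f := f.1

end EqCat

section Descent

variable {D : Type v} [SmallCategory D] {Φ : D ⥤ Cat.{v, v}} {c : Cocone Φ}

theorem descent_unique (hc : IsColimit c) {𝒵 : Type u₂} [Category.{v₂} 𝒵]
    (P Q : (c.pt : Cat) ⥤ 𝒵)
    (h : ∀ d, (c.ι.app d : (Φ.obj d : Cat) ⟶ c.pt).toFunctor ⋙ P
        = (c.ι.app d : (Φ.obj d : Cat) ⟶ c.pt).toFunctor ⋙ Q) :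
    P = Q := by
  let J : ∀ d : D, (Φ.obj d : Cat) ⥤ EqCat P Q := fun d =>
    { obj := fun x => ⟨(c.ι.app d).toFunctor.obj x, Functor.congr_obj (h d) x⟩
      map := fun f => ⟨(c.ι.app d).toFunctor.map f, by simpa using Functor.congr_hom (h d) f⟩
      map_id := fun x => EqCat.hom_ext (by simp)
      map_comp := fun f g => EqCat.hom_ext (by simp) }
  have Jcompat : ∀ {d e : D} (u : d ⟶ e),
      (Φ.map u : (Φ.obj d : Cat) ⟶ Φ.obj e).toFunctor ⋙ J e = J d := by
    intro d e u
    have hw : (Φ.map u : (Φ.obj d : Cat) ⟶ Φ.obj e).toFunctor ⋙ (c.ι.app e : (Φ.obj e : Cat) ⟶ c.pt).toFunctor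
        = (c.ι.app d).toFunctor := congrArg Cat.Hom.toFunctor (c.w u)
    refine Functor.hext (fun x => EqCat.obj_ext (Functor.congr_obj hw x)) ?_
    intro x y f
    exact EqCat.hom_hext (EqCat.obj_ext (Functor.congr_obj hw x))
      (EqCat.obj_ext (Functor.congr_obj hw y))
      ((conj_eqToHom_iff_heq _ _ (Functor.congr_obj hw x) (Functor.congr_obj hw y)).1
        (Functor.congr_hom hw f))
  let sE : Cocone Φ :=
    { pt := Cat.of (EqCat P Q)
      ι := { app := fun d => (J d).toCatHom
             naturality := fun {d e} u => by
               simp only [Functor.const_obj_obj, Functor.const_obj_map, Category.comp_id]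
               exact Cat.Hom.ext (Jcompat u) } }
  let R : (c.pt : Cat) ⥤ EqCat P Q := (hc.desc sE).toFunctor
  have hfac : ∀ d, (c.ι.app d : (Φ.obj d : Cat) ⟶ c.pt).toFunctor ⋙ R = J d := fun d => congrArg Cat.Hom.toFunctor (hc.fac sE d)
  have hR : R ⋙ EqCat.incl P Q = 𝟭 (c.pt : Cat) := by
    have h1 : ∀ d, c.ι.app d ≫ ((R ⋙ EqCat.incl P Q : (c.pt : Cat) ⥤ (c.pt : Cat)).toCatHom
        : c.pt ⟶ c.pt) = c.ι.app d ≫ (𝟙 c.pt) := by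
      intro d
      have h2 : (c.ι.app d : (Φ.obj d : Cat) ⟶ c.pt).toFunctor ⋙ (R ⋙ EqCat.incl P Q)
          = J d ⋙ EqCat.incl P Q := by rw [← Functor.assoc, hfac]
      have h3 : J d ⋙ EqCat.incl P Q = (c.ι.app d : (Φ.obj d : Cat) ⟶ c.pt).toFunctor := rfl
      exact Cat.Hom.ext ((h2.trans h3).trans (Functor.comp_id _).symm)
    exact congrArg Cat.Hom.toFunctor (hc.hom_ext h1)
  have hO : ∀ k, P.obj k = Q.obj k := by
    intro k
    have h2 : (R.obj k).pt = k := Functor.congr_obj hR k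
    have h3 := (R.obj k).eq
    rw [h2] at h3
    exact h3
  refine Functor.hext hO ?_
  intro k k' f
  have h5 : (EqCat.incl P Q).map (R.map f)
      = eqToHom (Functor.congr_obj hR k) ≫ f ≫ eqToHom (Functor.congr_obj hR k').symm := by
    simpa using Functor.congr_hom hR f
  have e1 : HEq (P.map ((R.map f).1)) (P.map f) := by
    have h6 : P.map ((R.map f).1) = eqToHom (congrArg P.obj (Functor.congr_obj hR k))
        ≫ P.map f ≫ eqToHom (congrArg P.obj (Functor.congr_obj hR k')).symm := by
      rw [show ((R.map f).1 : (R.obj k).pt ⟶ (R.obj k').pt)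
          = eqToHom (Functor.congr_obj hR k) ≫ f ≫ eqToHom (Functor.congr_obj hR k').symm from h5]
      simp [eqToHom_map]
    exact (conj_eqToHom_iff_heq _ _ (congrArg P.obj (Functor.congr_obj hR k))
      (congrArg P.obj (Functor.congr_obj hR k'))).1 h6
  have e2 : HEq (Q.map ((R.map f).1)) (Q.map f) := by
    have h6 : Q.map ((R.map f).1) = eqToHom (congrArg Q.obj (Functor.congr_obj hR k))
        ≫ Q.map f ≫ eqToHom (congrArg Q.obj (Functor.congr_obj hR k')).symm := by
      rw [show ((R.map f).1 : (R.obj k).pt ⟶ (R.obj k').pt)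
          = eqToHom (Functor.congr_obj hR k) ≫ f ≫ eqToHom (Functor.congr_obj hR k').symm from h5]
      simp [eqToHom_map]
    exact (conj_eqToHom_iff_heq _ _ (congrArg Q.obj (Functor.congr_obj hR k))
      (congrArg Q.obj (Functor.congr_obj hR k'))).1 h6
  have e3 : HEq (P.map ((R.map f).1)) (Q.map ((R.map f).1)) :=
    (conj_eqToHom_iff_heq _ _ (R.obj k).eq (R.obj k').eq).1 (R.map f).2
  exact (e1.symm.trans e3).trans e2

theorem descent_exists (hc : IsColimit c) {𝒵 : Type u₂} [Category.{v} 𝒵]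
    (F : ∀ d : D, (Φ.obj d : Cat) ⥤ 𝒵)
    (hF : ∀ {d e : D} (u : d ⟶ e), (Φ.map u : (Φ.obj d : Cat) ⟶ Φ.obj e).toFunctor ⋙ F e = F d) :
    ∃ M : (c.pt : Cat) ⥤ 𝒵, ∀ d, (c.ι.app d : (Φ.obj d : Cat) ⟶ c.pt).toFunctor ⋙ M = F d := by
  let rel : (Σ d : D, (Φ.obj d : Cat)) → (Σ d : D, (Φ.obj d : Cat)) → Prop :=
    fun p q => (F p.1).obj p.2 = (F q.1).obj q.2
  let qf : Quot rel → 𝒵 := Quot.lift (fun p => (F p.1).obj p.2) (fun _ _ h => h)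
  let E := InducedCategory 𝒵 qf
  let L : ∀ d : D, (Φ.obj d : Cat) ⥤ E := fun d =>
    { obj := fun x => (Quot.mk rel ⟨d, x⟩ : E)
      map := fun {x y} f => InducedCategory.homMk
        ((F d).map f : qf (Quot.mk rel ⟨d, x⟩) ⟶ qf (Quot.mk rel ⟨d, y⟩))
      map_id := fun x => InducedCategory.hom_ext ((F d).map_id x)
      map_comp := fun f g => InducedCategory.hom_ext ((F d).map_comp f g) }
  have Lcompat : ∀ {d e : D} (u : d ⟶ e),
      (Φ.map u : (Φ.obj d : Cat) ⟶ Φ.obj e).toFunctor ⋙ L e = L d := by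
    intro d e u
    refine Functor.hext (fun x => Quot.sound (Functor.congr_obj (hF u) x)) ?_
    intro x y f
    have key : ∀ {X X' Y Y' : E} (hX : X = X') (hY : Y = Y') {f : qf X ⟶ qf Y}
        {g : qf X' ⟶ qf Y'}, HEq f g →
        HEq (InducedCategory.homMk f : X ⟶ Y) (InducedCategory.homMk g : X' ⟶ Y') := by
      intro X X' Y Y' hX hY f g h; subst hX; subst hY; cases h; rfl
    exact key (show (Quot.mk rel ⟨e, (Φ.map u).toFunctor.obj x⟩ : E) = Quot.mk rel ⟨d, x⟩ from
        Quot.sound (Functor.congr_obj (hF u) x))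
      (show (Quot.mk rel ⟨e, (Φ.map u).toFunctor.obj y⟩ : E) = Quot.mk rel ⟨d, y⟩ from
        Quot.sound (Functor.congr_obj (hF u) y))
      ((conj_eqToHom_iff_heq _ _ (Functor.congr_obj (hF u) x)
      (Functor.congr_obj (hF u) y)).1 (Functor.congr_hom (hF u) f))
  let sE : Cocone Φ :=
    { pt := Cat.of E
      ι := { app := fun d => (L d).toCatHom
             naturality := fun {d e} u => by
               simp only [Functor.const_obj_obj, Functor.const_obj_map, Category.comp_id]
               exact Cat.Hom.ext (Lcompat u) } }
  refine ⟨((hc.desc sE).toFunctor : (c.pt : Cat) ⥤ E) ⋙ inducedFunctor qf, fun d => ?_⟩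
  have h5 : (c.ι.app d : (Φ.obj d : Cat) ⟶ c.pt).toFunctor ⋙ ((hc.desc sE).toFunctor : (c.pt : Cat) ⥤ E) = L d :=
    congrArg Cat.Hom.toFunctor (hc.fac sE d)
  refine (Functor.assoc _ _ _).symm.trans ((congrArg (· ⋙ inducedFunctor qf) h5).trans ?_)
  rfl

end Descent

section ColimHelpers

variable {J K : Type v} [SmallCategory J] [SmallCategory K]
  {C : Type u} [Category.{v} C] [HasColimits C]

lemma ι_eqToHom {F G : J ⥤ C} (h : F = G) (p : colimit F = colimit G) (j : J) :
    colimit.ι F j ≫ eqToHom p = eqToHom (Functor.congr_obj h j) ≫ colimit.ι G j := by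
  subst h; simp

lemma ι_eqToHom_assoc {F G : J ⥤ C} (h : F = G) (p : colimit F = colimit G) (j : J)
    {W : C} (k : colimit G ⟶ W) :
    colimit.ι F j ≫ eqToHom p ≫ k
      = eqToHom (Functor.congr_obj h j) ≫ colimit.ι G j ≫ k := by
  subst h; simp

lemma ι_obj_congr (F : J ⥤ C) {j j' : J} (h : j = j') :
    colimit.ι F j = eqToHom (congrArg F.obj h) ≫ colimit.ι F j' := by
  subst h; simp

end ColimHelpers

end ColimDecompAux

open ColimDecompAux


/-- **Colimit Decomposition Formula** (Peschke–Tholen, Theorem 4.1; Batanin–Berger, Lemma 7.13).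
Let `Φ : D ⥤ Cat` be a diagram of small categories with colimit cocone
`K_d = c.ι.app d : Φ d ⥤ 𝒦 = c.pt`, and let `X : 𝒦 ⥤ 𝒳` be a diagram in a cocomplete
category `𝒳`.  Then for the `D`-shaped diagram `G` with `G d = colim (K_d ⋙ X)`, whose
action on `u : d ⟶ e` is the canonical morphism obtained by restricting the colimit
cocone of `K_e ⋙ X` along `Φ u` (i.e. `colimit.pre`, modulo the identification
`Φ u ⋙ K_e = K_d`), one has `colim X ≅ colim G`. -/
theorem colimit_decomposition_formula
    {D : Type v} [SmallCategory D] (Φ : D ⥤ Cat.{v, v})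
    (c : Cocone Φ) (hc : IsColimit c)
    {𝒳 : Type u} [Category.{v} 𝒳] [HasColimits 𝒳]
    (X : ↑c.pt ⥤ 𝒳)
    (G : D ⥤ 𝒳)
    (hobj : ∀ d : D, G.obj d = colimit ((c.ι.app d : (Φ.obj d : Cat)  ⟶ c.pt).toFunctor ⋙ X))
    (hmap : ∀ {d e : D} (u : d ⟶ e),
      G.map u = eqToHom (hobj d) ≫
        eqToHom (show colimit ((c.ι.app d : (Φ.obj d : Cat) ⟶ c.pt).toFunctor ⋙ X) =
            colimit ((Φ.map u : (Φ.obj d : Cat) ⟶ Φ.obj e).toFunctor ⋙ ((c.ι.app e).toFunctor ⋙ X)) from by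
          rw [← c.w u]; rfl) ≫
        colimit.pre ((c.ι.app e : (Φ.obj e : Cat) ⟶ c.pt).toFunctor ⋙ X)
          (Φ.map u : (Φ.obj d : Cat) ⟶ Φ.obj e).toFunctor ≫
        eqToHom (hobj e).symm) :
    Nonempty (colimit X ≅ colimit G) := by
  classical
  have hw : ∀ {d e : D} (u : d ⟶ e),
      (Φ.map u : (Φ.obj d : Cat) ⟶ Φ.obj e).toFunctor ⋙ (c.ι.app e : (Φ.obj e : Cat) ⟶ c.pt).toFunctor
        = (c.ι.app d : (Φ.obj d : Cat) ⟶ c.pt).toFunctor := fun u => congrArg Cat.Hom.toFunctor (c.w u)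
  have hwX : ∀ {d e : D} (u : d ⟶ e),
      (Φ.map u : (Φ.obj d : Cat) ⟶ Φ.obj e).toFunctor ⋙ ((c.ι.app e : (Φ.obj e : Cat) ⟶ c.pt).toFunctor ⋙ X)
        = (c.ι.app d : (Φ.obj d : Cat) ⟶ c.pt).toFunctor ⋙ X := by
    intro d e u
    rw [← Functor.assoc]
    exact congrArg (· ⋙ X) (hw u)
  -- the candidate colimit cocone on `G` with point `colimit X`
  let cone2 : Cocone G :=
    { pt := colimit X
      ι := { app := fun d => eqToHom (hobj d) ≫ colimit.pre X (c.ι.app d).toFunctor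
             naturality := fun {d e} u => by
               simp only [Functor.const_obj_obj, Functor.const_obj_map, Category.comp_id]
               rw [hmap u]
               simp only [Category.assoc, eqToHom_trans, eqToHom_refl, Category.id_comp]
               rw [← cancel_epi (eqToHom (hobj d).symm)]
               simp only [eqToHom_trans_assoc, eqToHom_refl, Category.id_comp]
               apply colimit.hom_ext
               intro j
               rw [ι_eqToHom_assoc (hwX u).symm _ j _]
               simp only [Category.assoc, colimit.ι_pre, colimit.ι_pre_assoc]
               rw [ι_obj_congr X (Functor.congr_obj (hw u) j).symm]
               simp [eqToHom_trans_assoc] } }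
  -- uniqueness of morphisms out of `colimit X` determined on the `colimit.pre`'s
  have uniq2 : ∀ (Y : 𝒳) (f g : colimit X ⟶ Y),
      (∀ d, colimit.pre X (c.ι.app d).toFunctor ≫ f = colimit.pre X (c.ι.app d).toFunctor ≫ g) → f = g := by
    intro Y f g hfg
    let Lf : (c.pt : Cat) ⥤ Ov Y :=
      { obj := fun k => ⟨X.obj k, colimit.ι X k ≫ f⟩
        map := fun {k k'} φ => ⟨X.map φ, by rw [← Category.assoc, colimit.w]⟩
        map_id := fun k => Ov.hom_ext (by simp)
        map_comp := fun φ ψ => Ov.hom_ext (by simp) }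
    let Lg : (c.pt : Cat) ⥤ Ov Y :=
      { obj := fun k => ⟨X.obj k, colimit.ι X k ≫ g⟩
        map := fun {k k'} φ => ⟨X.map φ, by rw [← Category.assoc, colimit.w]⟩
        map_id := fun k => Ov.hom_ext (by simp)
        map_comp := fun φ ψ => Ov.hom_ext (by simp) }
    have hobjLfLg : ∀ (d : D) (x : (Φ.obj d : Cat)),
        ((c.ι.app d : (Φ.obj d : Cat) ⟶ c.pt).toFunctor ⋙ Lf).obj x
          = ((c.ι.app d : (Φ.obj d : Cat) ⟶ c.pt).toFunctor ⋙ Lg).obj x := by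
      intro d x
      refine Ov.obj_ext rfl ?_
      simp only [eqToHom_refl, Category.id_comp]
      show colimit.ι X ((c.ι.app d).toFunctor.obj x) ≫ f = colimit.ι X ((c.ι.app d).toFunctor.obj x) ≫ g
      rw [← colimit.ι_pre X (c.ι.app d).toFunctor x, Category.assoc, Category.assoc, hfg d]
    have hLfLg : Lf = Lg := by
      refine descent_unique hc Lf Lg (fun d => ?_)
      refine Functor.hext (hobjLfLg d) ?_
      intro x y φ
      exact Ov.hom_hext (hobjLfLg d x) (hobjLfLg d y) (heq_of_eq rfl)
    apply colimit.hom_ext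
    intro k
    have h2 := Ov.arr_eq (Functor.congr_obj hLfLg k)
    simpa using h2
  -- existence of the factorization through `cone2`
  have exist1 : ∀ s : Cocone G, ∃ f : colimit X ⟶ s.pt,
      ∀ d, (eqToHom (hobj d) ≫ colimit.pre X (c.ι.app d).toFunctor) ≫ f = s.ι.app d := by
    intro s
    let F : ∀ d : D, (Φ.obj d : Cat) ⥤ Ov s.pt := fun d =>
      { obj := fun j => ⟨X.obj ((c.ι.app d).toFunctor.obj j),
          colimit.ι ((c.ι.app d : (Φ.obj d : Cat) ⟶ c.pt).toFunctor ⋙ X) j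
            ≫ eqToHom (hobj d).symm ≫ s.ι.app d⟩
        map := fun {j j'} φ => ⟨X.map ((c.ι.app d).toFunctor.map φ), by
          rw [← Category.assoc (X.map _)]
          exact congrArg (· ≫ eqToHom (hobj d).symm ≫ s.ι.app d)
            (colimit.w ((c.ι.app d : (Φ.obj d : Cat) ⟶ c.pt).toFunctor ⋙ X) φ)⟩
        map_id := fun j => Ov.hom_ext (by simp)
        map_comp := fun φ ψ => Ov.hom_ext (by simp) }
    have hFobj : ∀ {d e : D} (u : d ⟶ e) (j : (Φ.obj d : Cat)),
        ((Φ.map u : (Φ.obj d : Cat) ⟶ Φ.obj e).toFunctor ⋙ F e).obj j = (F d).obj j := by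
      intro d e u j
      refine Ov.obj_ext (congrArg X.obj (Functor.congr_obj (hw u) j)) ?_
      show colimit.ι ((c.ι.app e : (Φ.obj e : Cat) ⟶ c.pt).toFunctor ⋙ X) ((Φ.map u).toFunctor.obj j)
          ≫ eqToHom (hobj e).symm ≫ s.ι.app e
        = eqToHom _ ≫ colimit.ι ((c.ι.app d : (Φ.obj d : Cat) ⟶ c.pt).toFunctor ⋙ X) j
            ≫ eqToHom (hobj d).symm ≫ s.ι.app d
      rw [← s.w u, hmap u]
      simp only [Category.assoc, eqToHom_trans_assoc, eqToHom_refl, Category.id_comp]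
      rw [ι_eqToHom_assoc (hwX u).symm
        (show colimit ((c.ι.app d : (Φ.obj d : Cat) ⟶ c.pt).toFunctor ⋙ X)
          = colimit ((Φ.map u : (Φ.obj d : Cat) ⟶ Φ.obj e).toFunctor ⋙ ((c.ι.app e : _ ⟶ _).toFunctor ⋙ X)) from by
            rw [hwX u]) j _]
      simp only [colimit.ι_pre_assoc]
      simp [eqToHom_trans_assoc]
    have hFcompat : ∀ {d e : D} (u : d ⟶ e),
        (Φ.map u : (Φ.obj d : Cat) ⟶ Φ.obj e).toFunctor ⋙ F e = F d := by
      intro d e u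
      refine Functor.hext (fun j => hFobj u j) ?_
      intro j j' φ
      refine Ov.hom_hext (hFobj u j) (hFobj u j') ?_
      show HEq (X.map ((c.ι.app e).toFunctor.map ((Φ.map u).toFunctor.map φ))) (X.map ((c.ι.app d).toFunctor.map φ))
      exact (conj_eqToHom_iff_heq _ _ (Functor.congr_obj (hwX u) j)
        (Functor.congr_obj (hwX u) j')).1 (Functor.congr_hom (hwX u) φ)
    obtain ⟨M, hM⟩ := descent_exists hc F hFcompat
    have hMX : M ⋙ OvForget s.pt = X := by
      refine descent_unique hc _ X (fun d => ?_)
      rw [← Functor.assoc, hM d]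
      rfl
    let t : Cocone X :=
      { pt := s.pt
        ι := { app := fun k => eqToHom (Functor.congr_obj hMX k).symm ≫ (M.obj k).arr
               naturality := fun {k k'} φ => by
                 simp only [Functor.const_obj_obj, Functor.const_obj_map, Category.comp_id]
                 have h1 := (M.map φ).2
                 have h2 : (M.map φ).1 = eqToHom (Functor.congr_obj hMX k)
                     ≫ X.map φ ≫ eqToHom (Functor.congr_obj hMX k').symm :=
                   Functor.congr_hom hMX φ
                 rw [h2] at h1
                 rw [← h1]
                 simp } }
    refine ⟨colimit.desc X t, fun d => ?_⟩
    have key : colimit.pre X (c.ι.app d).toFunctor ≫ colimit.desc X t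
        = eqToHom (hobj d).symm ≫ s.ι.app d := by
      apply colimit.hom_ext
      intro j
      rw [colimit.ι_pre_assoc, colimit.ι_desc]
      show eqToHom _ ≫ (M.obj ((c.ι.app d).toFunctor.obj j)).arr = _
      have ho : M.obj ((c.ι.app d).toFunctor.obj j) = (F d).obj j := Functor.congr_obj (hM d) j
      rw [Ov.arr_eq ho]
      show eqToHom _ ≫ eqToHom _ ≫ colimit.ι ((c.ι.app d : (Φ.obj d : Cat) ⟶ c.pt).toFunctor ⋙ X) j
          ≫ eqToHom (hobj d).symm ≫ s.ι.app d = _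
      simp [eqToHom_trans_assoc]
    rw [Category.assoc, key]
    simp
  -- assemble the colimit cocone structure
  have is2 : IsColimit cone2 :=
    { desc := fun s => (exist1 s).choose
      fac := fun s d => (exist1 s).choose_spec d
      uniq := fun s m hm => by
        refine uniq2 s.pt m (exist1 s).choose (fun d => ?_)
        have h1 := hm d
        have h2 := (exist1 s).choose_spec d
        have h3 := h1.trans h2.symm
        simp only [Category.assoc] at h3
        have := congrArg (fun t => eqToHom (hobj d).symm ≫ t) h3
        simpa [eqToHom_trans_assoc, cone2] using this }
  exact ⟨is2.coconePointUniqueUpToIso (colimit.isColimit G)⟩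
end

section
/- Let D be a small category and Φ : D ⥤ Cat a functor with a colimit cocone (K_d : Φ d ⥤ 𝒦)_{d ∈ D} in Cat (so for every u : d → e one has Φ u ⋙ K_e = K_d). Let 𝒳 be a complete category and X : 𝒦 ⥤ 𝒳 a functor. Then the limit of X is isomorphic to the limit of the Dᵒᵖ-shaped diagram in 𝒳 whose value at d is lim (K_d ⋙ X) and whose value at u : d → e is the canonical morphism lim (K_e ⋙ X) → lim (K_d ⋙ X) obtained by restricting the limit cone of K_e ⋙ X along Φ u (using Φ u ⋙ K_e = K_d): lim_𝒦 X ≅ lim_{d∈Dᵒᵖ} lim_{Φ d} (K_d ⋙ X). -/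
open CategoryTheory CategoryTheory.Limits

universe v u

namespace LimRecomp

set_option linter.unusedSectionVars false

noncomputable section

variable {D : Type v} [SmallCategory D] (Φ : D ⥤ Cat.{v, v}) (c : Cocone Φ)
  {𝒳 : Type u} [Category.{v} 𝒳] [HasLimits 𝒳] (X : ↑c.pt ⥤ 𝒳)

abbrev K (d : D) : (Φ.obj d : Cat) ⥤ c.pt := (c.ι.app d).toFunctor

/-- `k ↦ (A ⟶ X k)`. -/
def Y (A : 𝒳) : ↑c.pt ⥤ Type v := X ⋙ coyoneda.obj (Opposite.op A)

theorem helper1 {A W : 𝒳} {p q : (Y Φ c X A).Elements} (h : p = q)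
    (hp : X.obj p.1 = W) (hq : X.obj q.1 = W) :
    (p.2 : A ⟶ X.obj p.1) ≫ eqToHom hp = (q.2 : A ⟶ X.obj q.1) ≫ eqToHom hq := by
  subst h; rfl

theorem elements_eqToHom_val {C : Type*} [Category C] {F : C ⥤ Type*} {p q : F.Elements}
    (h : p = q) : (eqToHom h).val = eqToHom (congrArg Sigma.fst h) := by
  subst h; rfl

theorem limit_congr {J : Type v} [Category.{v} J] {F₁ F₂ : J ⥤ 𝒳} (h : F₁ = F₂) :
    limit F₁ = limit F₂ := by subst h; rfl

theorem eqToHom_comp_limitπ {J : Type v} [Category.{v} J] {F₁ F₂ : J ⥤ 𝒳} (h : F₁ = F₂)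
    (hl : limit F₁ = limit F₂) (j : J) :
    eqToHom hl ≫ limit.π F₂ j = limit.π F₁ j ≫ eqToHom (Functor.congr_obj h j) := by
  subst h; simp

theorem pre_pre_eqToHom {J₁ J₂ : Type v} [Category.{v} J₁] [Category.{v} J₂]
    (P : J₁ ⥤ J₂) (Q : J₂ ⥤ ↑c.pt) {R : J₁ ⥤ ↑c.pt} (h : P ⋙ Q = R)
    {W : 𝒳} (hW : W = limit (R ⋙ X)) (E : limit (P ⋙ (Q ⋙ X)) = W) :
    limit.pre X Q ≫ limit.pre (Q ⋙ X) P ≫ eqToHom E = limit.pre X R ≫ eqToHom hW.symm := by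
  subst h
  subst hW
  apply limit.hom_ext
  intro j
  simp only [Category.assoc]
  rw [eqToHom_comp_limitπ (𝒳 := 𝒳) (Functor.assoc P Q X).symm E j]
  simp [limit.pre_π]
  symm
  apply limit.pre_π

/-- Section of the elements of `Y A` over `Φ.obj d` induced by a map into `lim (K_d ⋙ X)`. -/
def sect (A : 𝒳) (d : D) (y : A ⟶ limit (K Φ c d ⋙ X)) :
    (Φ.obj d : Cat) ⥤ (Y Φ c X A).Elements where
  obj j := ⟨(K Φ c d).obj j, y ≫ limit.π (K Φ c d ⋙ X) j⟩
  map {j j'} f := ⟨(K Φ c d).map f, by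
    show (y ≫ limit.π (K Φ c d ⋙ X) j) ≫ X.map ((K Φ c d).map f) =
      y ≫ limit.π (K Φ c d ⋙ X) j'
    rw [Category.assoc, ← limit.w (K Φ c d ⋙ X) f]
    rfl⟩
  map_id j := by apply Subtype.ext; simp; rfl
  map_comp f g := by apply Subtype.ext; simp; rfl

theorem sect_π (A : 𝒳) (d : D) (y : A ⟶ limit (K Φ c d ⋙ X)) :
    sect Φ c X A d y ⋙ CategoryOfElements.π _ = (K Φ c d : (Φ.obj d : Cat) ⥤ ↑c.pt) := rfl

theorem sect_comp {d e : D} (u : d ⟶ e) (A : 𝒳) (y : A ⟶ limit (K Φ c e ⋙ X))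
    (E : limit ((Φ.map u : (Φ.obj d : Cat) ⟶ Φ.obj e).toFunctor ⋙ (K Φ c e ⋙ X)) =
      limit (K Φ c d ⋙ X)) :
    (Φ.map u : (Φ.obj d : Cat) ⟶ Φ.obj e).toFunctor ⋙ sect Φ c X A e y =
      sect Φ c X A d
        (y ≫ limit.pre (K Φ c e ⋙ X) (Φ.map u : (Φ.obj d : Cat) ⟶ Φ.obj e).toFunctor ≫ eqToHom E) := by
  have hK : (Φ.map u : (Φ.obj d : Cat) ⟶ Φ.obj e).toFunctor ⋙ (K Φ c e : _ ⥤ ↑c.pt)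
      = (K Φ c d : (Φ.obj d : Cat) ⥤ ↑c.pt) := congrArg Cat.Hom.toFunctor (c.w u)
  have hKX : (Φ.map u : (Φ.obj d : Cat) ⟶ Φ.obj e).toFunctor ⋙ (K Φ c e ⋙ X)
      = (K Φ c d : (Φ.obj d : Cat) ⥤ ↑c.pt) ⋙ X := by
    rw [← Functor.assoc, hK]
  have hobje : ∀ j : (Φ.obj d : Cat),
      ((Φ.map u : (Φ.obj d : Cat) ⟶ Φ.obj e).toFunctor ⋙ sect Φ c X A e y).obj j =
      (sect Φ c X A d
        (y ≫ limit.pre (K Φ c e ⋙ X) (Φ.map u : (Φ.obj d : Cat) ⟶ Φ.obj e).toFunctor ≫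
          eqToHom E)).obj j := by
    intro j
    apply Functor.Elements.ext _ _ (Functor.congr_obj hK j)
    show (y ≫ limit.π (K Φ c e ⋙ X) ((Φ.map u).toFunctor.obj j)) ≫ X.map (eqToHom _) = _
    erw [eqToHom_map X (Functor.congr_obj hK j)]
    show _ = (y ≫ limit.pre (K Φ c e ⋙ X) (Φ.map u).toFunctor ≫ eqToHom E) ≫ limit.π (K Φ c d ⋙ X) j
    simp only [Category.assoc]
    rw [eqToHom_comp_limitπ (𝒳 := 𝒳) hKX E j]
    rw [← Category.assoc (limit.pre (K Φ c e ⋙ X) (Φ.map u).toFunctor) (limit.π _ j) (eqToHom _),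
      limit.pre_π]
    exact Category.assoc _ _ _
  refine CategoryTheory.Functor.ext hobje ?_
  intro j j' f
  apply Subtype.ext
  show (K Φ c e).map ((Φ.map u).toFunctor.map f) =
    (eqToHom (hobje j)).val ≫
      ((sect Φ c X A d
        (y ≫ limit.pre (K Φ c e ⋙ X) (Φ.map u : (Φ.obj d : Cat) ⟶ Φ.obj e).toFunctor ≫
          eqToHom E)).map f).val ≫ (eqToHom (hobje j').symm).val
  rw [elements_eqToHom_val (hobje j), elements_eqToHom_val (hobje j').symm]
  exact Functor.congr_hom hK f

def taut : ↑c.pt ⥤ (Y Φ c X (limit X)).Elements where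
  obj k := ⟨k, limit.π X k⟩
  map {k k'} f := ⟨f, by show limit.π X k ≫ X.map f = limit.π X k'; simp⟩
  map_id k := by apply Subtype.ext; rfl
  map_comp f g := by apply Subtype.ext; rfl


theorem sect_cone_nat (A : 𝒳) (s : c.pt ⟶ Cat.of (Y Φ c X A).Elements)
    (hsec : s ≫ ((CategoryOfElements.π (Y Φ c X A)).toCatHom :
      Cat.of (Y Φ c X A).Elements ⟶ c.pt) = 𝟙 c.pt)
    {k k' : ↑c.pt} (f : k ⟶ k') :
    (((s.toFunctor.obj k).2 : A ⟶ X.obj (s.toFunctor.obj k).1) ≫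
        eqToHom (congrArg X.obj (Functor.congr_obj (congrArg Cat.Hom.toFunctor hsec) k))) ≫ X.map f =
      ((s.toFunctor.obj k').2 : A ⟶ X.obj (s.toFunctor.obj k').1) ≫
        eqToHom (congrArg X.obj (Functor.congr_obj (congrArg Cat.Hom.toFunctor hsec) k')) := by
  have hk : ∀ m : ↑c.pt, ((s.toFunctor.obj m).1 : ↑c.pt) = m := fun m => Functor.congr_obj (congrArg Cat.Hom.toFunctor hsec) m
  have hval : ((s.toFunctor.obj k).2 : A ⟶ X.obj (s.toFunctor.obj k).1) ≫ X.map ((s.toFunctor.map f).val) =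
      ((s.toFunctor.obj k').2 : A ⟶ X.obj (s.toFunctor.obj k').1) := (s.toFunctor.map f).2
  have hmf : (s.toFunctor.map f).val = eqToHom (hk k) ≫ f ≫ eqToHom (hk k').symm :=
    Functor.congr_hom (congrArg Cat.Hom.toFunctor hsec) f
  have hmf2 : (s.toFunctor.map f).val ≫ eqToHom (hk k') = eqToHom (hk k) ≫ f := by
    rw [hmf]; simp
  calc ((s.toFunctor.obj k).2 ≫ eqToHom (congrArg X.obj (hk k))) ≫ X.map f
      = (s.toFunctor.obj k).2 ≫ X.map ((s.toFunctor.map f).val ≫ eqToHom (hk k')) := by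
        rw [hmf2, X.map_comp, eqToHom_map]
        erw [Category.assoc]
    _ = (s.toFunctor.obj k').2 ≫ eqToHom (congrArg X.obj (hk k')) := by
        erw [X.map_comp, ← Category.assoc, hval, eqToHom_map]

theorem Eu {d e : D} (u : d ⟶ e) :
    limit ((Φ.map u : (Φ.obj d : Cat) ⟶ Φ.obj e).toFunctor ⋙ (K Φ c e ⋙ X)) =
      limit (K Φ c d ⋙ X) := by
  apply limit_congr (𝒳 := 𝒳)
  rw [← Functor.assoc,
    show (Φ.map u : (Φ.obj d : Cat) ⟶ Φ.obj e).toFunctor ⋙ (K Φ c e : _ ⥤ _) =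
      (K Φ c d : (Φ.obj d : Cat) ⥤ _) from congrArg Cat.Hom.toFunctor (c.w u)]

variable (G : Dᵒᵖ ⥤ 𝒳) (hc : IsColimit c)
  (hobj : ∀ d : D, G.obj (Opposite.op d) =
    limit ((c.ι.app d : (Φ.obj d : Cat) ⟶ c.pt).toFunctor ⋙ X))
  (hmap : ∀ {d e : D} (u : d ⟶ e),
    G.map u.op = eqToHom (hobj e) ≫
      limit.pre ((c.ι.app e : (Φ.obj e : Cat) ⟶ c.pt).toFunctor ⋙ X)
        (Φ.map u : (Φ.obj d : Cat) ⟶ Φ.obj e).toFunctor ≫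
      eqToHom ((Eu Φ c X u).trans (hobj d).symm))

include hmap in
theorem ynat {d e : D} (u : d ⟶ e) :
    (limit.π G (Opposite.op e) ≫ eqToHom (hobj e)) ≫
      limit.pre (K Φ c e ⋙ X) (Φ.map u : (Φ.obj d : Cat) ⟶ Φ.obj e).toFunctor ≫
      eqToHom (Eu Φ c X u) =
    limit.π G (Opposite.op d) ≫ eqToHom (hobj d) := by
  rw [← limit.w G u.op, hmap u]
  simp only [Category.assoc, eqToHom_trans, eqToHom_trans_assoc]

include hmap in
/-- The cocone on `Φ` with point the category of elements of `Y (lim G)`. -/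
def cocE : Cocone Φ where
  pt := Cat.of (Y Φ c X (limit G)).Elements
  ι :=
    { app := fun d => (sect Φ c X (limit G) d (limit.π G (Opposite.op d) ≫ eqToHom (hobj d))).toCatHom
      naturality := by
        intro d e u
        simp only [Functor.const_obj_obj, Functor.const_obj_map, Category.comp_id]
        show ((Φ.map u : (Φ.obj d : Cat) ⟶ Φ.obj e).toFunctor ⋙
            sect Φ c X (limit G) e (limit.π G (Opposite.op e) ≫ eqToHom (hobj e))).toCatHom =
          (sect Φ c X (limit G) d (limit.π G (Opposite.op d) ≫ eqToHom (hobj d))).toCatHom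
        rw [sect_comp Φ c X u (limit G) _ (Eu Φ c X u)]
        congr 2
        exact ynat Φ c X G hobj hmap u }

/-- The section functor `𝒦 ⥤ Elements (Y (lim G))` obtained from the colimit property. -/
def sFun : c.pt ⟶ Cat.of (Y Φ c X (limit G)).Elements :=
  hc.desc (cocE Φ c X G hobj hmap)

theorem sFun_fac (d : D) :
    c.ι.app d ≫ sFun Φ c X G hc hobj hmap =
      (sect Φ c X (limit G) d (limit.π G (Opposite.op d) ≫ eqToHom (hobj d))).toCatHom :=
  hc.fac (cocE Φ c X G hobj hmap) d

theorem sFun_sec :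
    sFun Φ c X G hc hobj hmap ≫
      ((CategoryOfElements.π (Y Φ c X (limit G))).toCatHom :
        Cat.of (Y Φ c X (limit G)).Elements ⟶ c.pt) = 𝟙 c.pt := by
  refine hc.hom_ext fun d => ?_
  rw [← Category.assoc, sFun_fac Φ c X G hc hobj hmap d]
  rfl

theorem skObj (k : ↑c.pt) : (((sFun Φ c X G hc hobj hmap).toFunctor.obj k).1 : ↑c.pt) = k :=
  Functor.congr_obj (congrArg Cat.Hom.toFunctor (sFun_sec Φ c X G hc hobj hmap)) k

/-- The cone over `X` with apex `lim G`. -/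
def coneC : Cone X where
  pt := limit G
  π :=
    { app := fun k => (((sFun Φ c X G hc hobj hmap).toFunctor.obj k).2 :
          limit G ⟶ X.obj ((sFun Φ c X G hc hobj hmap).toFunctor.obj k).1) ≫
        eqToHom (congrArg X.obj (skObj Φ c X G hc hobj hmap k))
      naturality := by
        intro k k' f
        simp only [Functor.const_obj_obj, Functor.const_obj_map, Category.id_comp]
        exact (sect_cone_nat Φ c X (limit G) (sFun Φ c X G hc hobj hmap)
          (sFun_sec Φ c X G hc hobj hmap) f).symm }

/-- The cone over `G` with apex `lim X`. -/
def coneG : Cone G where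
  pt := limit X
  π :=
    { app := fun dop => limit.pre X (K Φ c dop.unop) ≫ eqToHom (hobj dop.unop).symm
      naturality := by
        intro dop eop f
        simp only [Functor.const_obj_obj, Functor.const_obj_map, Category.id_comp]
        rw [show (f : dop ⟶ eop) = (f.unop).op from rfl, hmap f.unop]
        simp only [Category.assoc, eqToHom_trans, eqToHom_trans_assoc, eqToHom_refl,
          Category.id_comp]
        exact (pre_pre_eqToHom Φ c X (Φ.map f.unop).toFunctor (K Φ c dop.unop) (congrArg Cat.Hom.toFunctor (c.w f.unop))
          (hobj eop.unop) _).symm }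

def phi : limit X ⟶ limit G := limit.lift G (coneG Φ c X G hobj hmap)

def psi : limit G ⟶ limit X := limit.lift X (coneC Φ c X G hc hobj hmap)

theorem psi_phi : psi Φ c X G hc hobj hmap ≫ phi Φ c X G hobj hmap = 𝟙 (limit G) := by
  have key : ∀ d : D, psi Φ c X G hc hobj hmap ≫ limit.pre X (K Φ c d) =
      limit.π G (Opposite.op d) ≫ eqToHom (hobj d) := by
    intro d
    apply limit.hom_ext
    intro j
    rw [Category.assoc, limit.pre_π]
    rw [show psi Φ c X G hc hobj hmap ≫ limit.π X ((K Φ c d).obj j) =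
      (coneC Φ c X G hc hobj hmap).π.app ((K Φ c d).obj j) from limit.lift_π _ _]
    have hobj2 : (sFun Φ c X G hc hobj hmap).toFunctor.obj ((K Φ c d).obj j) =
        (sect Φ c X (limit G) d (limit.π G (Opposite.op d) ≫ eqToHom (hobj d))).obj j :=
      Functor.congr_obj (congrArg Cat.Hom.toFunctor (sFun_fac Φ c X G hc hobj hmap d)) j
    have h1 := helper1 Φ c X hobj2
      (congrArg X.obj (skObj Φ c X G hc hobj hmap ((K Φ c d).obj j))) rfl
    simp only [eqToHom_refl, Category.comp_id] at h1
    rw [show (coneC Φ c X G hc hobj hmap).π.app ((K Φ c d).obj j) =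
      ((sFun Φ c X G hc hobj hmap).toFunctor.obj ((K Φ c d).obj j)).2 ≫
        eqToHom (congrArg X.obj (skObj Φ c X G hc hobj hmap ((K Φ c d).obj j))) from rfl]
    rw [h1]
    exact Category.comp_id _
  apply limit.hom_ext
  intro dop
  rw [Category.assoc, Category.id_comp]
  rw [show phi Φ c X G hobj hmap ≫ limit.π G dop =
    limit.pre X (K Φ c dop.unop) ≫ eqToHom (hobj dop.unop).symm from limit.lift_π _ _]
  rw [← Category.assoc, key dop.unop]
  simp

/-- Postcomposition with `phi` as a map of element categories. -/
def alpha : Y Φ c X (limit G) ⟶ Y Φ c X (limit X) where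
  app k := TypeCat.ofHom fun g => phi Φ c X G hobj hmap ≫ g
  naturality k k' f := by
    ext g
    exact (Category.assoc _ _ _).symm

theorem sect_taut :
    sFun Φ c X G hc hobj hmap ≫
      ((CategoryOfElements.map (alpha Φ c X G hobj hmap)).toCatHom :
        Cat.of (Y Φ c X (limit G)).Elements ⟶ Cat.of (Y Φ c X (limit X)).Elements) =
    (show c.pt ⟶ Cat.of (Y Φ c X (limit X)).Elements from (taut Φ c X).toCatHom) := by
  refine hc.hom_ext fun d => ?_
  rw [← Category.assoc, sFun_fac Φ c X G hc hobj hmap d]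
  have hobje : ∀ j : (Φ.obj d : Cat),
      ((sect Φ c X (limit G) d (limit.π G (Opposite.op d) ≫ eqToHom (hobj d))) ⋙
        CategoryOfElements.map (alpha Φ c X G hobj hmap)).obj j =
      ((c.ι.app d : (Φ.obj d : Cat) ⟶ c.pt).toFunctor ⋙ taut Φ c X).obj j := by
    intro j
    refine Functor.Elements.ext _ _ ?h1 ?h2
    case h1 => rfl
    case h2 =>
      show (Y Φ c X (limit X)).map (eqToHom rfl)
          (phi Φ c X G hobj hmap ≫
            ((limit.π G (Opposite.op d) ≫ eqToHom (hobj d)) ≫ limit.π (K Φ c d ⋙ X) j)) =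
        limit.π X ((K Φ c d).obj j)
      simp only [eqToHom_refl, FunctorToTypes.map_id_apply]
      simp only [← Category.assoc]
      rw [show phi Φ c X G hobj hmap ≫ limit.π G (Opposite.op d) =
        limit.pre X (K Φ c d) ≫ eqToHom (hobj d).symm from limit.lift_π _ _]
      simp only [Category.assoc, eqToHom_trans, eqToHom_refl, Category.comp_id, limit.pre_π]
      simp
      rfl
  apply Cat.ext
  refine CategoryTheory.Functor.ext hobje ?_
  intro j j' f
  apply Subtype.ext
  show ((K Φ c d).map f : _ ⟶ _) =
    (eqToHom (hobje j)).val ≫ ((K Φ c d).map f) ≫ (eqToHom (hobje j').symm).val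
  rw [elements_eqToHom_val (hobje j), elements_eqToHom_val (hobje j').symm]
  simp
  exact ((Category.id_comp _).trans (Category.comp_id _)).symm

theorem phi_psi :
    phi Φ c X G hobj hmap ≫ psi Φ c X G hc hobj hmap = 𝟙 (limit X) := by
  apply limit.hom_ext
  intro k
  rw [Category.assoc, Category.id_comp]
  rw [show psi Φ c X G hc hobj hmap ≫ limit.π X k =
      (((sFun Φ c X G hc hobj hmap).toFunctor.obj k).2 :
        limit G ⟶ X.obj ((sFun Φ c X G hc hobj hmap).toFunctor.obj k).1) ≫
      eqToHom (congrArg X.obj (skObj Φ c X G hc hobj hmap k)) from limit.lift_π _ _]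
  have hq := Functor.congr_obj (congrArg Cat.Hom.toFunctor (sect_taut Φ c X G hc hobj hmap)) k
  have h1 := helper1 Φ c X (A := limit X) hq
    (congrArg X.obj (skObj Φ c X G hc hobj hmap k)) rfl
  simp only [eqToHom_refl, Category.comp_id] at h1
  erw [← Category.assoc]
  exact h1.trans (Category.comp_id _)

end
end LimRecomp

open LimRecomp in
/-- **Limit Recomposition Formula** (Peschke–Tholen, Corollary 4.2).
Let `Φ : D ⥤ Cat` be a diagram of small categories with colimit cocone
`K_d = c.ι.app d : Φ d ⥤ 𝒦 = c.pt`, and let `X : 𝒦 ⥤ 𝒳` be a diagram in a complete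
category `𝒳`.  Then for the `Dᵒᵖ`-shaped diagram `G` with `G d = lim (K_d ⋙ X)`, whose
action on `u : d ⟶ e` is the canonical morphism `lim (K_e ⋙ X) ⟶ lim (K_d ⋙ X)`
obtained by restricting the limit cone of `K_e ⋙ X` along `Φ u` (i.e. `limit.pre`,
modulo the identification `Φ u ⋙ K_e = K_d`), one has `lim X ≅ lim G`. -/
theorem limit_recomposition_formula
    {D : Type v} [SmallCategory D] (Φ : D ⥤ Cat.{v, v})
    (c : Cocone Φ) (hc : IsColimit c)
    {𝒳 : Type u} [Category.{v} 𝒳] [HasLimits 𝒳]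
    (X : ↑c.pt ⥤ 𝒳)
    (G : Dᵒᵖ ⥤ 𝒳)
    (hobj : ∀ d : D, G.obj (Opposite.op d) =
      limit ((c.ι.app d : (Φ.obj d : Cat) ⟶ c.pt).toFunctor ⋙ X))
    (hmap : ∀ {d e : D} (u : d ⟶ e),
      G.map u.op = eqToHom (hobj e) ≫
        limit.pre ((c.ι.app e : (Φ.obj e : Cat) ⟶ c.pt).toFunctor ⋙ X)
          (Φ.map u : (Φ.obj d : Cat) ⟶ Φ.obj e).toFunctor ≫
        eqToHom (show limit ((Φ.map u : (Φ.obj d : Cat) ⟶ Φ.obj e).toFunctor ⋙ ((c.ι.app e).toFunctor ⋙ X)) =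
            G.obj (Opposite.op d) from by
          rw [hobj d, ← c.w u]; rfl)) :
    Nonempty (limit X ≅ limit G) := by
  have hmap' : ∀ {d e : D} (u : d ⟶ e),
      G.map u.op = eqToHom (hobj e) ≫
        limit.pre ((c.ι.app e : (Φ.obj e : Cat) ⟶ c.pt).toFunctor ⋙ X)
          (Φ.map u : (Φ.obj d : Cat) ⟶ Φ.obj e).toFunctor ≫
        eqToHom ((Eu Φ c X u).trans (hobj d).symm) := fun {d e} u => hmap u
  exact ⟨⟨phi Φ c X G hobj hmap', psi Φ c X G hc hobj hmap',
    phi_psi Φ c X G hc hobj hmap', psi_phi Φ c X G hc hobj hmap'⟩⟩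
end

section
/- (Twisted Fubini Colimit Formula.) Let D be a small category, Φ : D ⥤ Cat a functor, and 𝒳 a category that has colimits of shape Φ d for every object d of D. Let T : Grothendieck Φ ⥤ 𝒳 be a functor. Form the functor D ⥤ 𝒳 sending d to colim (ι_d ⋙ T) and sending a morphism u : d → e to the canonical morphism colim (ι_d ⋙ T) → colim (ι_e ⋙ T) induced by the natural transformation ι_d ⋙ T ⟶ Φ u ⋙ (ι_e ⋙ T) whose component at x ∈ Φ d is T applied to the morphism (u, 𝟙_{(Φ u).obj x}) : (d, x) → (e, (Φ u).obj x) of Grothendieck Φ. Then T has a colimit if and only if this functor D ⥤ 𝒳 has a colimit, and in that case colim_{Grothendieck Φ} T ≅ colim_{d∈D} colim_{x∈Φ d} T(d, x). -/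
open CategoryTheory CategoryTheory.Limits

universe v u

/-- **Twisted Fubini Colimit Formula** (Chachólski–Scherer; Peschke–Tholen, Theorem 3.2).
For `Φ : D ⥤ Cat` and a category `𝒳` with colimits of shape `Φ d` for all `d`, and any
`T : Grothendieck Φ ⥤ 𝒳`, form the diagram `G : D ⥤ 𝒳` with `G d = colim (ι_d ⋙ T)`,
whose action on `u : d ⟶ e` is induced by the natural transformation
`ι_d ⋙ T ⟶ Φ u ⋙ ι_e ⋙ T` with component `T.map (u, 𝟙)` at `x`, followed by
restriction of the colimit cocone along `Φ u`.  Then `T` has a colimit iff `G` does,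
and in that case `colim T ≅ colim G`. -/
theorem twisted_fubini_colimit_formula
    {D : Type v} [SmallCategory D] (Φ : D ⥤ Cat.{v, v})
    {𝒳 : Type u} [Category.{v} 𝒳]
    [∀ d : D, HasColimitsOfShape (Φ.obj d) 𝒳]
    (T : Grothendieck Φ ⥤ 𝒳)
    (G : D ⥤ 𝒳)
    (hobj : ∀ d : D, G.obj d = colimit (Grothendieck.ι Φ d ⋙ T))
    (hmap : ∀ {d e : D} (u : d ⟶ e)
      (α : Grothendieck.ι Φ d ⋙ T ⟶
        (Φ.map u).toFunctor ⋙ Grothendieck.ι Φ e ⋙ T),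
      (∀ x : ↑(Φ.obj d), α.app x =
        T.map (show (⟨d, x⟩ : Grothendieck Φ) ⟶ ⟨e, (Φ.map u).toFunctor.obj x⟩ from ⟨u, 𝟙 _⟩)) →
      G.map u = eqToHom (hobj d) ≫ colimMap α ≫
        colimit.pre (Grothendieck.ι Φ e ⋙ T)
          (Φ.map u).toFunctor ≫ eqToHom (hobj e).symm) :
    (HasColimit T ↔ HasColimit G) ∧
      ∀ [HasColimit T] [HasColimit G], Nonempty (colimit T ≅ colimit G) := by
  have hiso : G ≅ fiberwiseColimit T := by
    refine NatIso.ofComponents (fun d => eqToIso (hobj d)) ?_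
    intro d e u
    rw [hmap u (Functor.whiskerRight (Grothendieck.ιNatTrans u) T ≫ (Functor.associator _ _ _).hom)
      (fun x => by simp [Grothendieck.ιNatTrans]; rfl)]
    simp [fiberwiseColimit]
  have h1 : HasColimit G ↔ HasColimit (fiberwiseColimit T) :=
    ⟨fun _ => hasColimit_of_iso hiso.symm, fun _ => hasColimit_of_iso hiso⟩
  have h2 : HasColimit T ↔ HasColimit (fiberwiseColimit T) :=
    ⟨fun _ => hasColimit_fiberwiseColimit T,
     fun _ => hasColimit_of_hasColimit_fiberwiseColimit_of_hasColimit T⟩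
  refine ⟨h2.trans h1.symm, ?_⟩
  intro _ _
  have : HasColimit (fiberwiseColimit T) := h1.mp inferInstance
  exact ⟨(colimitFiberwiseColimitIso T).symm ≪≫ (HasColimit.isoOfNatIso hiso.symm)⟩
end

section
/- (Twisted Fubini Limit Formula.) Let D be a small category, Φ : D ⥤ Cat a functor, and 𝒳 a category that has limits of shape (Φ d)ᵒᵖ for every object d of D. Let T : (Grothendieck Φ)ᵒᵖ ⥤ 𝒳 be a functor. Form the functor Dᵒᵖ ⥤ 𝒳 sending d to lim (ι_dᵒᵖ ⋙ T) and sending a morphism u : d → e of D to the canonical morphism lim (ι_eᵒᵖ ⋙ T) → lim (ι_dᵒᵖ ⋙ T) induced by the natural transformation (Φ u)ᵒᵖ ⋙ ι_dᵒᵖ ⋙ T ⟶ ι_eᵒᵖ ⋙ T whose component at y ∈ Φ e ... is T applied to the opposite of the morphism (u, 𝟙) of Grothendieck Φ. Then T has a limit if and only if this functor Dᵒᵖ ⥤ 𝒳 has a limit, and in that case lim_{(Grothendieck Φ)ᵒᵖ} T ≅ lim_{d∈Dᵒᵖ} lim_{(Φ d)ᵒᵖ} (ι_dᵒᵖ ⋙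 T). -/
open CategoryTheory CategoryTheory.Limits

universe v u

/-- **Twisted Fubini Limit Formula** (Peschke–Tholen, Corollary 3.4).
For `Φ : D ⥤ Cat` and a category `𝒳` with limits of shape `(Φ d)ᵒᵖ` for all `d`, and any
`T : (Grothendieck Φ)ᵒᵖ ⥤ 𝒳`, form the diagram `G : Dᵒᵖ ⥤ 𝒳` with
`G d = lim (ι_dᵒᵖ ⋙ T)`, whose action on `u : d ⟶ e` is the restriction of the limit cone
along `(Φ u)ᵒᵖ` followed by the morphism of limits induced by the natural transformation
`(Φ u)ᵒᵖ ⋙ ι_eᵒᵖ ⋙ T ⟶ ι_dᵒᵖ ⋙ T` whose component at `x` is `T.map (u, 𝟙)ᵒᵖ`.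
Then `T` has a limit iff `G` does, and in that case `lim T ≅ lim G`. -/
theorem twisted_fubini_limit_formula
    {D : Type v} [SmallCategory D] (Φ : D ⥤ Cat.{v, v})
    {𝒳 : Type u} [Category.{v} 𝒳]
    [∀ d : D, HasLimitsOfShape (↑(Φ.obj d))ᵒᵖ 𝒳]
    (T : (Grothendieck Φ)ᵒᵖ ⥤ 𝒳)
    (G : Dᵒᵖ ⥤ 𝒳)
    (hobj : ∀ d : D, G.obj (Opposite.op d) = limit ((Grothendieck.ι Φ d).op ⋙ T))
    (hmap : ∀ {d e : D} (u : d ⟶ e)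
      (β : Functor.op (C := ↑(Φ.obj d)) (D := ↑(Φ.obj e)) (Φ.map u).toFunctor ⋙ (Grothendieck.ι Φ e).op ⋙ T ⟶
        (Grothendieck.ι Φ d).op ⋙ T),
      (∀ x : ↑(Φ.obj d), β.app (Opposite.op x) =
        T.map (Quiver.Hom.op
          (show (⟨d, x⟩ : Grothendieck Φ) ⟶ ⟨e, (Φ.map u).toFunctor.obj x⟩ from ⟨u, 𝟙 _⟩))) →
      G.map u.op = eqToHom (hobj e) ≫
        limit.pre ((Grothendieck.ι Φ e).op ⋙ T)
          (Functor.op (C := ↑(Φ.obj d)) (D := ↑(Φ.obj e)) (Φ.map u).toFunctor) ≫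
        limMap β ≫ eqToHom (hobj d).symm) :
    (HasLimit T ↔ HasLimit G) ∧
      ∀ [HasLimit T] [HasLimit G], Nonempty (limit T ≅ limit G) := by
  haveI hc : ∀ {X Y : D} (f : X ⟶ Y),
      HasColimit ((Φ.map f).toFunctor ⋙ Grothendieck.ι Φ Y ⋙ T.rightOp) := fun {X Y} f => inferInstance
  have e : G ≅ (fiberwiseColimit T.rightOp).leftOp := by
    refine NatIso.ofComponents (fun d =>
      eqToIso (hobj d.unop) ≪≫
        (colimitRightOpIsoUnopLimit ((Grothendieck.ι Φ d.unop).op ⋙ T)).unop) ?_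
    intro d e f
    have key := hmap f.unop (Functor.whiskerRight (NatTrans.op (Grothendieck.ιNatTrans f.unop)) T)
      (fun x => rfl)
    rw [show f = f.unop.op from rfl, key]
    apply Quiver.Hom.op_inj
    apply colimit.hom_ext
    intro j
    simp only [fiberwiseColimit]
    simp
    have h1 : colimit.ι (Grothendieck.ι Φ (Opposite.unop e) ⋙ T.rightOp) j
        = colimit.ι ((Grothendieck.ι Φ (Opposite.unop e)).op ⋙ T).rightOp j := rfl
    have h2 : colimit.ι (Grothendieck.ι Φ (Opposite.unop d) ⋙ T.rightOp) ((Φ.map f.unop).toFunctor.obj j)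
        = colimit.ι ((Grothendieck.ι Φ (Opposite.unop d)).op ⋙ T).rightOp ((Φ.map f.unop).toFunctor.obj j) :=
      rfl
    rw [h1, h2]
    rw [reassoc_of% ι_comp_colimitRightOpIsoUnopLimit_hom
          ((Grothendieck.ι Φ e.unop).op ⋙ T) j,
        reassoc_of% ι_comp_colimitRightOpIsoUnopLimit_hom
          ((Grothendieck.ι Φ d.unop).op ⋙ T) ((Φ.map f.unop).toFunctor.obj j)]
    apply Quiver.Hom.unop_inj
    simp
  constructor
  · constructor
    · intro hT
      haveI : HasColimit T.rightOp := inferInstance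
      haveI := hasColimit_fiberwiseColimit T.rightOp
      haveI : HasLimit (fiberwiseColimit T.rightOp).leftOp := inferInstance
      exact hasLimit_of_iso e.symm
    · intro hG
      haveI : HasLimit (fiberwiseColimit T.rightOp).leftOp := hasLimit_of_iso e
      haveI : HasColimit (fiberwiseColimit T.rightOp) := hasColimit_of_hasLimit_leftOp _
      haveI : HasColimit T.rightOp :=
        hasColimit_of_hasColimit_fiberwiseColimit_of_hasColimit _
      exact hasLimit_of_hasColimit_rightOp T
  · intro hT hG
    haveI : HasColimit T.rightOp := inferInstance
    haveI := hasColimit_fiberwiseColimit T.rightOp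
    exact ⟨(colimitRightOpIsoUnopLimit T).unop ≪≫
      (colimitFiberwiseColimitIso T.rightOp).unop ≪≫
      (limitLeftOpIsoUnopColimit (fiberwiseColimit T.rightOp)).symm ≪≫
      (HasLimit.isoOfNatIso e).symm⟩
end

section
/- Let D be a small category and Φ : D ⥤ Cat a functor with a colimit cocone (K_d : Φ d ⥤ 𝒦)_{d ∈ D} in Cat (so Φ u ⋙ K_e = K_d for all u : d → e). Then the comparison functor Q : Grothendieck Φ ⥤ 𝒦, defined on objects by (d, x) ↦ (K_d).obj x and on a morphism (u, f) : (d, x) → (e, y) by (K_e).map f (which is well-typed since (K_d).obj x = (K_e).obj ((Φ u).obj x)), is a final (i.e., cofinal) functor. -/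
open CategoryTheory CategoryTheory.Limits

universe v u

namespace GrothAux

variable {K : Type u} [Category.{v} K]

/-- Auxiliary category: objects are objects of `K` equipped with a "test function"
from arrows out of `k` into a fixed type `T`. -/
structure Fct (k : K) (T : Type v) : Type max u v where
  pt : K
  t : (k ⟶ pt) → T

variable {k : K} {T : Type v}

instance : Category.{v} (Fct k T) where
  Hom a b := {h : a.pt ⟶ b.pt // ∀ f, b.t (f ≫ h) = a.t f}
  id a := ⟨𝟙 a.pt, fun f => by simp⟩
  comp g h := ⟨g.1 ≫ h.1, fun f => by rw [← Category.assoc, h.2, g.2]⟩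
  id_comp g := Subtype.ext (Category.id_comp g.1)
  comp_id g := Subtype.ext (Category.comp_id g.1)
  assoc f g h := Subtype.ext (Category.assoc f.1 g.1 h.1)

@[simp] lemma id_val (a : Fct k T) : (𝟙 a : a ⟶ a).1 = 𝟙 a.pt := rfl

@[simp] lemma comp_val {a b c : Fct k T} (g : a ⟶ b) (h : b ⟶ c) :
    (g ≫ h).1 = g.1 ≫ h.1 := rfl

/-- The forgetful projection `Fct k T ⥤ K`. -/
@[simps]
def proj (k : K) (T : Type v) : Fct k T ⥤ K where
  obj a := a.pt
  map g := g.1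

instance proj_faithful : (proj k T).Faithful where
  map_injective h := Subtype.ext h

lemma Fct.ext' {a b : Fct k T} (h1 : a.pt = b.pt)
    (h2 : ∀ f : k ⟶ a.pt, a.t f = b.t (f ≫ eqToHom h1)) : a = b := by
  obtain ⟨pa, ta⟩ := a
  obtain ⟨pb, tb⟩ := b
  dsimp at h1
  subst h1
  simp only [eqToHom_refl, Category.comp_id] at h2
  simp only [Fct.mk.injEq, heq_eq_eq, true_and]
  funext f
  exact h2 f

lemma Fct.eqToHom_val {a b : Fct k T} (h : a = b) :
    (eqToHom h).1 = eqToHom (congrArg Fct.pt h) := by subst h; rfl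

lemma Fct.t_congr {a b : Fct k T} (h : a = b) (f : k ⟶ b.pt) :
    b.t f = a.t (f ≫ eqToHom (congrArg Fct.pt h).symm) := by subst h; simp

end GrothAux

/-- **Peschke–Tholen, Lemma 4.8.**  For a functor `Φ : D ⥤ Cat` with colimit cocone
`(K_d = c.ι.app d : Φ d ⥤ 𝒦 = c.pt)`, the comparison functor
`Q : Grothendieck Φ ⥤ 𝒦`, acting on objects by `(d, x) ↦ K_d.obj x` and on a morphism
`(u, f) : (d, x) ⟶ (e, y)` by `K_e.map f` (well-typed since `K_d.obj x = K_e.obj ((Φ u).obj x)`),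
is a final (cofinal) functor. -/
theorem grothendieck_to_colimit_final
    {D : Type v} [SmallCategory D] (Φ : D ⥤ Cat.{v, v})
    (c : Cocone Φ) (hc : IsColimit c)
    (Q : Grothendieck Φ ⥤ ↑c.pt)
    (hobj : ∀ p : Grothendieck Φ,
      Q.obj p = (c.ι.app p.base : (Φ.obj p.base : Cat) ⟶ c.pt).toFunctor.obj p.fiber)
    (hmap : ∀ {p q : Grothendieck Φ} (f : p ⟶ q),
      Q.map f = eqToHom (hobj p) ≫
        eqToHom (show (c.ι.app p.base : (Φ.obj p.base : Cat) ⟶ c.pt).toFunctor.obj p.fiber =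
            (c.ι.app q.base : (Φ.obj q.base : Cat) ⟶ c.pt).toFunctor.obj ((Φ.map f.base).toFunctor.obj p.fiber)
          from by rw [← c.w f.base]; rfl) ≫
        (c.ι.app q.base : (Φ.obj q.base : Cat) ⟶ c.pt).toFunctor.map f.fiber ≫
        eqToHom (hobj q).symm) :
    Q.Final := by
  constructor
  intro k
  let H : Grothendieck Φ ⥤ Type v := Q ⋙ coyoneda.obj (Opposite.op k)
  let rel := Functor.ColimitTypeRel H
  let T : Type v := Quot rel
  -- the cocone legs
  let lift : ∀ d : D, (Φ.obj d : Cat) ⥤ GrothAux.Fct k T := fun d =>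
    { obj := fun x => ⟨(c.ι.app d).toFunctor.obj x, fun f =>
        Quot.mk rel ⟨⟨d, x⟩, f ≫ eqToHom (hobj ⟨d, x⟩).symm⟩⟩
      map := fun {x y} m =>
        ⟨(c.ι.app d).toFunctor.map m, by
          intro f
          refine (Quot.sound ?_).symm
          refine ⟨{ base := 𝟙 d, fiber := eqToHom (by rw [Φ.map_id]; rfl) ≫ m }, ?_⟩
          show (f ≫ (c.ι.app d).toFunctor.map m) ≫ eqToHom _ = (f ≫ eqToHom _) ≫ Q.map _
          rw [hmap]
          simp [eqToHom_map]⟩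
      map_id := fun x => Subtype.ext (by simp)
      map_comp := fun f g => Subtype.ext (by simp) }
  have hlift : ∀ {d e : D} (u : d ⟶ e),
      ((Φ.map u).toFunctor ⋙ lift e : (Φ.obj d : Cat) ⥤ GrothAux.Fct k T) = lift d := by
    intro d e u
    have wu : Φ.map u ≫ c.ι.app e = c.ι.app d := c.w u
    refine CategoryTheory.Functor.ext (fun x => ?_) (fun x y m => ?_)
    · refine GrothAux.Fct.ext' (Functor.congr_obj (congrArg Cat.Hom.toFunctor wu) x) (fun f => ?_)
      refine (Quot.sound ?_).symm
      refine ⟨{ base := u, fiber := 𝟙 ((Φ.map u).toFunctor.obj x) }, ?_⟩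
      show f ≫ eqToHom _ = ((f ≫ eqToHom _) ≫ eqToHom _) ≫ Q.map _
      rw [hmap]
      simp
    · apply Functor.map_injective (GrothAux.proj k T)
      simp only [Functor.map_comp, eqToHom_map]
      exact Functor.congr_hom (congrArg Cat.Hom.toFunctor wu) m
  let s : Cocone Φ :=
    { pt := Cat.of (GrothAux.Fct k T)
      ι :=
        { app := fun d => (lift d).toCatHom
          naturality := fun d e u => Cat.ext (hlift u) } }
  let L : c.pt ⟶ s.pt := hc.desc s
  have fac : ∀ d : D, c.ι.app d ≫ L = (lift d).toCatHom := fun d => hc.fac s d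
  let πh : s.pt ⟶ c.pt := (GrothAux.proj k T).toCatHom
  have hproj : ∀ d : D, ((lift d).toCatHom ≫ πh : (Φ.obj d : Cat) ⟶ c.pt) = c.ι.app d := fun d =>
    Cat.ext rfl
  have h1 : L ≫ πh = hc.desc c := hc.uniq c (L ≫ πh) (fun d => by
    rw [← Category.assoc]
    show (c.ι.app d ≫ L) ≫ πh = _
    rw [fac d]
    exact hproj d)
  have h2 : 𝟙 c.pt = hc.desc c := hc.uniq c (𝟙 c.pt) (fun d => Category.comp_id _)
  have hsec : L ≫ πh = 𝟙 c.pt := h1.trans h2.symm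
  have hLπ : ∀ k' : ↑c.pt, (L.toFunctor.obj k').pt = k' := fun k' => Functor.congr_obj (congrArg Cat.Hom.toFunctor hsec) k'
  have tnat : ∀ {k' k'' : ↑c.pt} (h : k' ⟶ k'') (f : k ⟶ k'),
      (L.toFunctor.obj k'').t ((f ≫ h) ≫ eqToHom (hLπ k'').symm)
        = (L.toFunctor.obj k').t (f ≫ eqToHom (hLπ k').symm) := by
    intro k' k'' h f
    have hm : (L.toFunctor.map h).1 = eqToHom (hLπ k') ≫ h ≫ eqToHom (hLπ k'').symm :=
      Functor.congr_hom (congrArg Cat.Hom.toFunctor hsec) h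
    have hc2 := (L.toFunctor.map h).2 (f ≫ eqToHom (hLπ k').symm)
    rw [← hc2]
    congr 1
    rw [hm]
    simp
  have hbase : ∀ (d : D) (x : (Φ.obj d : Cat)),
      L.toFunctor.obj ((c.ι.app d).toFunctor.obj x) = (lift d).obj x :=
    fun d x => Functor.congr_obj (congrArg Cat.Hom.toFunctor (fac d)) x
  have key : ∀ (p : Grothendieck Φ) (f : k ⟶ Q.obj p),
      Quot.mk rel ⟨p, f⟩ = (L.toFunctor.obj k).t (𝟙 k ≫ eqToHom (hLπ k).symm) := by
    intro p f
    obtain ⟨d, x⟩ := p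
    have h1' := GrothAux.Fct.t_congr (hbase d x) (f ≫ eqToHom (hobj ⟨d, x⟩))
    have h2' := tnat (f ≫ eqToHom (hobj ⟨d, x⟩)) (𝟙 k)
    calc Quot.mk rel ⟨⟨d, x⟩, f⟩
        = ((lift d).obj x).t (f ≫ eqToHom (hobj ⟨d, x⟩)) := by
          show Quot.mk rel ⟨⟨d, x⟩, f⟩ =
            Quot.mk rel ⟨⟨d, x⟩, (f ≫ eqToHom (hobj ⟨d, x⟩)) ≫ eqToHom (hobj ⟨d, x⟩).symm⟩
          congr 1
          simp
      _ = (L.toFunctor.obj ((c.ι.app d).toFunctor.obj x)).t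
            ((f ≫ eqToHom (hobj ⟨d, x⟩)) ≫ eqToHom (congrArg GrothAux.Fct.pt (hbase d x)).symm) :=
          h1'
      _ = (L.toFunctor.obj ((c.ι.app d).toFunctor.obj x)).t
            ((𝟙 k ≫ (f ≫ eqToHom (hobj ⟨d, x⟩))) ≫ eqToHom (hLπ ((c.ι.app d).toFunctor.obj x)).symm) := by
          congr 1
          simp
      _ = (L.toFunctor.obj k).t (𝟙 k ≫ eqToHom (hLπ k).symm) := h2'
  have ne : Nonempty (StructuredArrow k Q) := by
    obtain ⟨⟨p, f⟩, -⟩ := Quot.exists_rep ((L.toFunctor.obj k).t (𝟙 k ≫ eqToHom (hLπ k).symm))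
    exact ⟨StructuredArrow.mk f⟩
  have : Nonempty (StructuredArrow k Q) := ne
  apply zigzag_isConnected
  rintro ⟨⟨⟨⟩⟩, p₁, f₁⟩ ⟨⟨⟨⟩⟩, p₂, f₂⟩
  exact Functor.Final.zigzag_of_eqvGen_colimitTypeRel
    (Quot.eq.mp ((key p₁ f₁).trans (key p₂ f₂).symm))
end

section
/- Let 𝒳 be a small category. The inclusion functor from the slice Cat/𝒳 (objects: pairs (I, X) with I a small category and X : I ⥤ 𝒳; morphisms (I, X) → (J, Y): functors F : I ⥤ J with F ⋙ Y = X) into the diagram category Diag°(𝒳), sending (I, X) to (I, X) and F to (F, 𝟙_X), has a right adjoint. The right adjoint Strict sends an object (J, Y) of Diag°(𝒳) to the comma category 𝒳 ↓ Y (objects: triples (a, j, u) with a ∈ 𝒳, j ∈ J, u : a → Y j) together with its domain projection to 𝒳. -/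
open CategoryTheory

universe v u

namespace DiagPaper

variable (𝒳 : Type u) [Category.{v} 𝒳]

structure DiagObj : Type (max u (v + 1)) where
  shape : Cat.{v, v}
  diag : shape ⥤ 𝒳

variable {𝒳}

structure DiagHom (A B : DiagObj 𝒳) : Type v where
  F : A.shape ⥤ B.shape
  φ : A.diag ⟶ F ⋙ B.diag

theorem DiagHom.ext' {A B : DiagObj 𝒳} {f g : DiagHom A B}
    (hF : f.F = g.F) (hφ : HEq f.φ g.φ) : f = g := by
  cases f; cases g
  dsimp only at hF hφ
  subst hF
  rw [eq_of_heq hφ]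

instance : Category (DiagObj 𝒳) where
  Hom := DiagHom
  id A := ⟨𝟭 A.shape, 𝟙 A.diag⟩
  comp f g := ⟨f.F ⋙ g.F, f.φ ≫ Functor.whiskerLeft f.F g.φ⟩
  id_comp f := DiagHom.ext' (Functor.id_comp _) (by apply heq_of_eq; ext i; simp)
  comp_id f := DiagHom.ext' (Functor.comp_id _) (by apply heq_of_eq; ext i; simp)
  assoc f g h := DiagHom.ext' (Functor.assoc _ _ _) (by apply heq_of_eq; ext i; simp)

@[simp] theorem DiagObj.comp_F {A B C : DiagObj 𝒳} (f : A ⟶ B) (g : B ⟶ C) :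
    (f ≫ g).F = f.F ⋙ g.F := rfl

@[simp] theorem DiagObj.comp_φ {A B C : DiagObj 𝒳} (f : A ⟶ B) (g : B ⟶ C) :
    (f ≫ g).φ = f.φ ≫ Functor.whiskerLeft f.F g.φ := rfl

@[simp] theorem DiagObj.id_F (A : DiagObj 𝒳) : (𝟙 A : DiagHom A A).F = 𝟭 A.shape := rfl

@[simp] theorem DiagObj.id_φ (A : DiagObj 𝒳) : (𝟙 A : DiagHom A A).φ = 𝟙 A.diag := rfl

/-- morphisms of the strict slice `Cat/𝒳`: functors strictly commuting with the diagrams. -/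
structure SliceHom (A B : DiagObj 𝒳) : Type v where
  F : A.shape ⥤ B.shape
  w : F ⋙ B.diag = A.diag

theorem SliceHom.ext' {A B : DiagObj 𝒳} {f g : SliceHom A B} (hF : f.F = g.F) : f = g := by
  cases f; cases g
  dsimp only at hF
  subst hF
  rfl

variable (𝒳)

/-- The strict slice category `Cat/𝒳`. -/
def CatSlice : Type (max u (v + 1)) := DiagObj 𝒳

instance : Category (CatSlice 𝒳) where
  Hom A B := SliceHom A B
  id A := ⟨𝟭 A.shape, Functor.id_comp _⟩
  comp f g := ⟨f.F ⋙ g.F, by rw [Functor.assoc, g.w, f.w]⟩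
  id_comp f := SliceHom.ext' (Functor.id_comp _)
  comp_id f := SliceHom.ext' (Functor.comp_id _)
  assoc f g h := SliceHom.ext' (Functor.assoc _ _ _)

variable {𝒳}

theorem heq_eqToHom_id {C : Type*} [Category C] {a b : C} (h : a = b) :
    HEq (eqToHom h) (𝟙 a) := by subst h; rfl

variable (𝒳)

/-- The (non-full) inclusion of the strict slice `Cat/𝒳` into `Diag°(𝒳)`,
sending `(I, X)` to `(I, X)` and `F` to `(F, 𝟙_X)`. -/
def sliceInclusion : CatSlice 𝒳 ⥤ DiagObj 𝒳 where
  obj A := A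
  map {A B} f := ⟨f.F, eqToHom f.w.symm⟩
  map_id A := DiagHom.ext' rfl
    (heq_eqToHom_id ((Functor.id_comp A.diag).symm))
  map_comp {A B C} f g := DiagHom.ext' rfl (by
    apply heq_of_eq
    ext i
    erw [DiagObj.comp_φ]; simp [eqToHom_app])


section Strictify

variable {𝒳 : Type v} [SmallCategory 𝒳]

/-- action of `Strict` on morphisms. -/
def strictifyMapFun {A B : DiagObj 𝒳} (f : A ⟶ B) :
    Comma (𝟭 𝒳) A.diag ⥤ Comma (𝟭 𝒳) B.diag where
  obj c := ⟨c.left, f.F.obj c.right, c.hom ≫ f.φ.app c.right⟩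
  map {c d} g := ⟨g.left, f.F.map g.right, by
    have hg := g.w
    dsimp at hg ⊢
    rw [← Category.assoc, hg, Category.assoc, Category.assoc]
    congr 1
    exact f.φ.naturality g.right⟩

theorem heq_eqToHom_comp {C : Type*} [Category C] {a b c : C} (h : a = b) (u : b ⟶ c) :
    HEq (eqToHom h ≫ u) u := by subst h; simp

theorem comma_obj_ext {A : Type*} [Category A] {B : Type*} [Category B] {T : Type*} [Category T]
    {L : A ⥤ T} {R : B ⥤ T} {X Y : Comma L R}
    (h1 : X.left = Y.left) (h2 : X.right = Y.right)
    (h3 : HEq X.hom Y.hom) : X = Y := by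
  cases X; cases Y
  dsimp at h1 h2 h3
  subst h1; subst h2
  rw [eq_of_heq h3]

/-- The right adjoint `Strict`. -/
def strictify : DiagObj 𝒳 ⥤ CatSlice 𝒳 where
  obj B := ⟨Cat.of (Comma (𝟭 𝒳) B.diag), Comma.fst _ _⟩
  map {A B} f := ⟨strictifyMapFun f, rfl⟩
  map_id A := SliceHom.ext' (by
    show strictifyMapFun (𝟙 A) = 𝟭 (Comma (𝟭 𝒳) A.diag)
    refine CategoryTheory.Functor.ext ?_ ?_
    · intro c
      exact comma_obj_ext rfl rfl (by simp [strictifyMapFun])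
    · intro c d g
      apply CommaMorphism.ext <;> simp [strictifyMapFun, eqToHom_map]
      · erw [Comma.eqToHom_left, Comma.eqToHom_left]; simp
      · erw [Comma.eqToHom_right, Comma.eqToHom_right]; simp)
  map_comp {A B C} f g := SliceHom.ext' (by
    show strictifyMapFun (f ≫ g) = strictifyMapFun f ⋙ strictifyMapFun g
    refine CategoryTheory.Functor.ext ?_ ?_
    · intro c
      exact comma_obj_ext rfl rfl (by simp [strictifyMapFun])
    · intro c d h
      apply CommaMorphism.ext <;> simp [strictifyMapFun, eqToHom_map]
      · erw [Comma.eqToHom_left, Comma.eqToHom_left]; simp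
      · erw [Comma.eqToHom_right, Comma.eqToHom_right]; simp)

/-- transpose of a Diag-morphism. -/
def toComma {A B : DiagObj 𝒳} (f : DiagHom A B) :
    (A.shape : Type v) ⥤ Comma (𝟭 𝒳) B.diag where
  obj i := ⟨A.diag.obj i, f.F.obj i, f.φ.app i⟩
  map {i j} g := ⟨A.diag.map g, f.F.map g, by simp [(f.φ.naturality g).symm]⟩

def strictHomEquiv (A : CatSlice 𝒳) (B : DiagObj 𝒳) :
    ((sliceInclusion 𝒳).obj A ⟶ B) ≃ (A ⟶ (strictify (𝒳 := 𝒳)).obj B) where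
  toFun f := ⟨toComma f, rfl⟩
  invFun g :=
    ⟨g.F ⋙ Comma.snd (𝟭 𝒳) B.diag,
      eqToHom g.w.symm ≫ (Functor.whiskerLeft g.F (Comma.natTrans (𝟭 𝒳) B.diag) :
        g.F ⋙ Comma.fst (𝟭 𝒳) B.diag ⟶ (g.F ⋙ Comma.snd (𝟭 𝒳) B.diag) ⋙ B.diag)⟩
  left_inv f := DiagHom.ext' rfl (by
    apply heq_of_eq
    ext i
    erw [NatTrans.comp_app]
    simp [toComma, eqToHom_app, Comma.natTrans]
    erw [eqToHom_app]; exact eq_of_heq (heq_eqToHom_comp _ _))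
  right_inv g := SliceHom.ext' (by
    show toComma _ = g.F
    refine CategoryTheory.Functor.ext ?_ ?_
    · intro i
      refine comma_obj_ext (Functor.congr_obj g.w i).symm rfl ?_
      show HEq ((eqToHom g.w.symm ≫ _).app i) _
      erw [NatTrans.comp_app]
      simp only [NatTrans.comp_app, eqToHom_app, Functor.whiskerLeft_app, Comma.natTrans]
      exact heq_eqToHom_comp _ _
    · intro i j k
      apply CommaMorphism.ext
      · have := Functor.congr_hom g.w.symm k
        simp [toComma, eqToHom_app]; erw [Comma.eqToHom_left, Comma.eqToHom_left]; exact this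
      · simp [toComma, eqToHom_map]; erw [Comma.eqToHom_right, Comma.eqToHom_right]; simp; rfl)

end Strictify

/-- **Peschke–Tholen, Proposition 2.6 (Lack's lemma).**  For a small category `𝒳`, the
inclusion functor `Cat/𝒳 ⥤ Diag°(𝒳)` has a right adjoint `Strict`, which sends an object
`(J, Y)` of `Diag°(𝒳)` to the comma category `𝒳 ↓ Y` together with its domain projection. -/
theorem sliceInclusion_hasRightAdjoint_strictification
    (𝒳 : Type v) [SmallCategory 𝒳] :
    ∃ (R : DiagObj 𝒳 ⥤ CatSlice 𝒳) (_ : sliceInclusion 𝒳 ⊣ R),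
      ∀ B : DiagObj 𝒳,
        R.obj B = DiagObj.mk (Cat.of (Comma (𝟭 𝒳) B.diag)) (Comma.fst (𝟭 𝒳) B.diag) := by
  refine ⟨strictify, Adjunction.mkOfHomEquiv
    { homEquiv := strictHomEquiv
      homEquiv_naturality_left_symm := ?_
      homEquiv_naturality_right := ?_ }, fun B => rfl⟩
  · intro A' A B f g
    refine DiagHom.ext' rfl ?_
    apply heq_of_eq
    ext i
    simp [strictHomEquiv, sliceInclusion, eqToHom_app, Comma.natTrans]
    erw [DiagObj.comp_φ]
    erw [NatTrans.comp_app, NatTrans.comp_app, Functor.whiskerLeft_app, NatTrans.comp_app]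
    simp [eqToHom_app, Comma.natTrans]
    erw [eqToHom_app, eqToHom_app, eqToHom_app]
    simp
    rfl
  · intro A B B' f g
    apply SliceHom.ext'
    show toComma _ = toComma _ ⋙ strictifyMapFun _
    refine CategoryTheory.Functor.ext ?_ ?_
    · intro i
      exact comma_obj_ext rfl rfl (by simp [strictHomEquiv, toComma, strictifyMapFun]; rfl)
    · intro i j k
      apply CommaMorphism.ext <;> simp [strictHomEquiv, toComma, strictifyMapFun, eqToHom_map]
      · erw [Comma.eqToHom_left, Comma.eqToHom_left]; simp
      · erw [Comma.eqToHom_right, Comma.eqToHom_right]; simp; rfl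

end DiagPaper
end

section
/- (Joint left Kan extension property of colimit injections.) Let D be a small category and Φ : D ⥤ Cat a functor with a colimit cocone (K_d : Φ d ⥤ 𝒦)_{d ∈ D} in Cat (so Φ u ⋙ K_e = K_d for all u : d → e). Let 𝒳 be any category and X, Y : 𝒦 ⥤ 𝒳 functors. Suppose given, for every object d of D, a natural transformation μ_d : K_d ⋙ X ⟶ K_d ⋙ Y such that for every morphism u : d → e of D one has whiskerLeft (Φ u) μ_e = μ_d (under the identification Φ u ⋙ K_e = K_d). Then there exists a unique natural transformation β : X ⟶ Y with whiskerLeft K_d β = μ_d for all d. -/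
open CategoryTheory CategoryTheory.Limits

universe v u

section Aux

variable {A : Type*} [Category A] {B : Type*} [Category B] {T : Type*} [Category T]
  {L : A ⥤ T} {R : B ⥤ T}

lemma comma_obj_ext {a a' : A} {b b' : B} (ha : a = a') (hb : b = b')
    {f : L.obj a ⟶ R.obj b} {f' : L.obj a' ⟶ R.obj b'}
    (hf : f = eqToHom (by rw [ha]) ≫ f' ≫ eqToHom (by rw [hb])) :
    Comma.mk a b f = Comma.mk a' b' f' := by
  subst ha hb
  simp at hf
  rw [hf]

lemma comma_hom_eq_of_eq {Z W : Comma L R} (h : Z = W) :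
    Z.hom = eqToHom (by rw [h]) ≫ W.hom ≫ eqToHom (by rw [h]) := by
  subst h; simp

lemma comma_hom_congr {Z Z' V V' : Comma L R} (hZ : Z = Z') (hV : V = V')
    {f : Z ⟶ V} {f' : Z' ⟶ V'}
    (hl : f.left = eqToHom (by rw [hZ]) ≫ f'.left ≫ eqToHom (by rw [hV]))
    (hr : f.right = eqToHom (by rw [hZ]) ≫ f'.right ≫ eqToHom (by rw [hV])) :
    f = eqToHom hZ ≫ f' ≫ eqToHom hV.symm := by
  subst hZ hV
  simp only [eqToHom_refl, Category.comp_id, Category.id_comp] at hl hr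
  apply Comma.hom_ext <;> simp [hl, hr]

end Aux

/-- **Joint left Kan extension property of colimit injections**
(Peschke–Tholen, Lemma 4.7).  Let `Φ : D ⥤ Cat` have colimit cocone
`(K_d = c.ι.app d : Φ d ⥤ 𝒦 = c.pt)` and let `X, Y : 𝒦 ⥤ 𝒳`.  Any family of natural
transformations `μ_d : K_d ⋙ X ⟶ K_d ⋙ Y` which is compatible with the identifications
`Φ u ⋙ K_e = K_d` (i.e. `whiskerLeft (Φ u) μ_e = μ_d`, expressed componentwise with the
induced `eqToHom`s) is induced by a unique natural transformation `β : X ⟶ Y` via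
whiskering with the `K_d`. -/
theorem joint_kan_extension_property
    {D : Type v} [SmallCategory D] (Φ : D ⥤ Cat.{v, v})
    (c : Cocone Φ) (hc : IsColimit c)
    {𝒳 : Type u} [Category.{v} 𝒳]
    (X Y : ↑c.pt ⥤ 𝒳)
    (μ : ∀ d : D, (c.ι.app d : (Φ.obj d : Cat) ⟶ c.pt).toFunctor ⋙ X ⟶
      (c.ι.app d : (Φ.obj d : Cat) ⟶ c.pt).toFunctor ⋙ Y)
    (hcompat : ∀ {d e : D} (u : d ⟶ e) (x : ↑(Φ.obj d)),
      (μ e).app ((Φ.map u).toFunctor.obj x) =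
        eqToHom (show X.obj ((c.ι.app e).toFunctor.obj ((Φ.map u).toFunctor.obj x)) =
            X.obj ((c.ι.app d).toFunctor.obj x) from by rw [← c.w u]; rfl) ≫
        (μ d).app x ≫
        eqToHom (show Y.obj ((c.ι.app d).toFunctor.obj x) =
            Y.obj ((c.ι.app e).toFunctor.obj ((Φ.map u).toFunctor.obj x)) from by rw [← c.w u]; rfl)) :
    ∃! β : X ⟶ Y, ∀ d : D,
      Functor.whiskerLeft (c.ι.app d : (Φ.obj d : Cat) ⟶ c.pt).toFunctor β = μ d := by
  -- the comma category `Comma X Y` as an object of `Cat`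
  let W : Cat.{v, v} := Cat.of (Comma X Y)
  -- the functors `Φ.obj d ⥤ Comma X Y`
  let G : ∀ d : D, (Φ.obj d : Cat) ⟶ W := fun d => Functor.toCatHom
    { obj := fun x => Comma.mk ((c.ι.app d).toFunctor.obj x) ((c.ι.app d).toFunctor.obj x) ((μ d).app x)
      map := fun {x y} f =>
        { left := (c.ι.app d).toFunctor.map f
          right := (c.ι.app d).toFunctor.map f
          w := (μ d).naturality f }
      map_id := by intro x; apply Comma.hom_ext <;> simp <;> rfl
      map_comp := by intro x y z f g; apply Comma.hom_ext <;> simp <;> rfl }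
  -- the cocone with vertex `Comma X Y`
  have hnat : ∀ {d e : D} (u : d ⟶ e), Φ.map u ≫ G e = G d := by
    intro d e u
    have hobj : ∀ x : (Φ.obj d : Cat),
        (c.ι.app e).toFunctor.obj ((Φ.map u).toFunctor.obj x) = (c.ι.app d).toFunctor.obj x := fun x =>
      Functor.congr_obj (congrArg Cat.Hom.toFunctor (c.w u)) x
    have hmap : ∀ {x y : (Φ.obj d : Cat)} (f : x ⟶ y),
        (c.ι.app e).toFunctor.map ((Φ.map u).toFunctor.map f) =
          eqToHom (hobj x) ≫ (c.ι.app d).toFunctor.map f ≫ eqToHom (hobj y).symm := fun f =>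
      Functor.congr_hom (congrArg Cat.Hom.toFunctor (c.w u)) f
    suffices h : ((Φ.map u).toFunctor ⋙
        (G e).toFunctor) = (G d).toFunctor by
      exact Cat.Hom.ext h
    refine CategoryTheory.Functor.ext (F := (Φ.map u).toFunctor ⋙ (G e).toFunctor)
      (G := (G d).toFunctor)
      (fun x => comma_obj_ext (hobj x) (hobj x) (hcompat u x))
      (fun x y f => ?_)
    refine comma_hom_congr (comma_obj_ext (hobj x) (hobj x) (hcompat u x))
      (comma_obj_ext (hobj y) (hobj y) (hcompat u y)) ?_ ?_
    · exact hmap f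
    · exact hmap f
  let ψ : Cocone Φ :=
    { pt := W
      ι := { app := G, naturality := fun d e u => by simpa using hnat u } }
  -- the induced functor
  let Lf : c.pt ⟶ W := hc.desc ψ
  have hfac : ∀ d, c.ι.app d ≫ Lf = G d := fun d => hc.fac ψ d
  -- it is a retraction of both projections
  have hfst : Lf.toFunctor ⋙ Comma.fst X Y = 𝟭 ↑c.pt := by
    have : Lf ≫ ((Comma.fst X Y).toCatHom : W ⟶ c.pt) = 𝟙 c.pt := by
      apply hc.hom_ext
      intro d
      rw [← Category.assoc, hfac d]
      show G d ≫ ((Comma.fst X Y).toCatHom : W ⟶ c.pt) = _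
      have : (G d : (Φ.obj d : Cat) ⟶ W) ≫ ((Comma.fst X Y).toCatHom : W ⟶ c.pt) = c.ι.app d := rfl
      rw [this]
      simp
    exact congrArg Cat.Hom.toFunctor this
  have hsnd : Lf.toFunctor ⋙ Comma.snd X Y = 𝟭 ↑c.pt := by
    have : Lf ≫ ((Comma.snd X Y).toCatHom : W ⟶ c.pt) = 𝟙 c.pt := by
      apply hc.hom_ext
      intro d
      rw [← Category.assoc, hfac d]
      show G d ≫ ((Comma.snd X Y).toCatHom : W ⟶ c.pt) = _
      have : (G d : (Φ.obj d : Cat) ⟶ W) ≫ ((Comma.snd X Y).toCatHom : W ⟶ c.pt) = c.ι.app d := rfl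
      rw [this]
      simp
    exact congrArg Cat.Hom.toFunctor this
  have e1 : X = Lf.toFunctor ⋙ (Comma.fst X Y ⋙ X) := by
    exact ((congrArg (fun F => F ⋙ X) hfst).trans (Functor.id_comp X)).symm
  have e2 : Lf.toFunctor ⋙ (Comma.snd X Y ⋙ Y) = Y := by
    exact (congrArg (fun F => F ⋙ Y) hsnd).trans (Functor.id_comp Y)
  -- the natural transformation
  let β : X ⟶ Y := eqToHom e1 ≫
    Functor.whiskerLeft Lf.toFunctor (Comma.natTrans X Y) ≫ eqToHom e2
  have happ : ∀ k : ↑c.pt, β.app k =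
      eqToHom (Functor.congr_obj e1 k) ≫ (Lf.toFunctor.obj k).hom ≫
        eqToHom (Functor.congr_obj e2 k) := by
    intro k
    simp [β, eqToHom_app, Comma.natTrans]
    rfl
  have hβ : ∀ d : D,
      Functor.whiskerLeft (c.ι.app d).toFunctor β = μ d := by
    intro d
    ext x
    have he : Lf.toFunctor.obj ((c.ι.app d).toFunctor.obj x) =
        Comma.mk ((c.ι.app d).toFunctor.obj x) ((c.ι.app d).toFunctor.obj x) ((μ d).app x) :=
      Functor.congr_obj (congrArg Cat.Hom.toFunctor (hfac d)) x
    have h2 := comma_hom_eq_of_eq he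
    simp only [Functor.whiskerLeft_app, happ, h2, Comma.eqToHom_left]
    simp [eqToHom_trans]
  refine ⟨β, hβ, ?_⟩
  · -- uniqueness
    intro γ hγ
    have key : ∀ (δ : X ⟶ Y), (∀ d : D,
        Functor.whiskerLeft (c.ι.app d).toFunctor δ = μ d) →
        (Functor.toCatHom
        ({ obj := fun k => Comma.mk k k (δ.app k)
           map := fun {k k'} f => { left := f, right := f, w := δ.naturality f }
           map_id := by intro k; apply Comma.hom_ext <;> simp <;> rfl
           map_comp := by intro _ _ _ f g; apply Comma.hom_ext <;> simp <;> rfl } : ↑c.pt ⥤ Comma X Y) :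
          c.pt ⟶ W) = Lf := by
      intro δ hδ
      refine (hc.uniq ψ _ ?_).trans (hc.uniq ψ Lf hfac).symm
      intro d
      suffices h : ((c.ι.app d).toFunctor ⋙
          ({ obj := fun k => Comma.mk k k (δ.app k)
             map := fun {k k'} f => { left := f, right := f, w := δ.naturality f }
             map_id := by intro k; apply Comma.hom_ext <;> simp <;> rfl
             map_comp := by intro _ _ _ f g; apply Comma.hom_ext <;> simp <;> rfl } :
            ↑c.pt ⥤ Comma X Y)) = (G d).toFunctor by
        exact Cat.Hom.ext h
      have hob : ∀ x : ↑(Φ.obj d),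
          Comma.mk ((c.ι.app d).toFunctor.obj x) ((c.ι.app d).toFunctor.obj x) (δ.app ((c.ι.app d).toFunctor.obj x)) =
            Comma.mk ((c.ι.app d).toFunctor.obj x) ((c.ι.app d).toFunctor.obj x) ((μ d).app x) := by
        intro x
        have hx : δ.app ((c.ι.app d).toFunctor.obj x) = (μ d).app x := by
          rw [← hδ d]; rfl
        exact comma_obj_ext rfl rfl (by simpa using hx)
      refine CategoryTheory.Functor.ext
        (F := (c.ι.app d).toFunctor ⋙ _)
        (G := (G d).toFunctor)
        (fun x => hob x) (fun x y f => ?_)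
      refine comma_hom_congr (hob x) (hob y) ?_ ?_
      · show (c.ι.app d).toFunctor.map f = _
        simp
        rfl
      · show (c.ι.app d).toFunctor.map f = _
        simp
        rfl
    have h2 := (key γ hγ).trans (key β hβ).symm
    ext k
    have h3 := Functor.congr_obj (congrArg Cat.Hom.toFunctor h2) k
    have h4 := comma_hom_eq_of_eq h3
    simpa using h4
end

section
/- (General Colimit Decomposition Formula.) Let 𝒳 be a cocomplete category, D a small category, Φ : D ⥤ Cat, and suppose given for each object d of D a functor X_d : Φ d ⥤ 𝒳 and for each morphism u : d → e a natural transformation φ^u : X_d ⟶ Φ u ⋙ X_e satisfying φ^{𝟙} = 𝟙 and φ^{v∘u} = φ^u ≫ whiskerLeft (Φ u) φ^v (i.e., the data of a functor D ⥤ Diag°(𝒳) lying over Φ). Let (K_d : Φ d ⥤ 𝒦) be a colimit cocone of Φ in Cat, let L_d be a pointwise left Kan extension of X_d along K_d, turn d ↦ L_d into a D-shaped diagram in the functor category (𝒦 ⥤ 𝒳) via the morphisms L_d ⟶ L_e induced, through the Kan-extension universal property, by the composite X_d ⟶ Φ u ⋙ X_e ⟶ Φ u ⋙ (K_e ⋙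 L_e) = K_d ⋙ L_e, and let X = colim_{d∈D} L_d in (𝒦 ⥤ 𝒳). Then colim_𝒦 X ≅ colim_{d∈D} colim_{Φ d} X_d. -/
open CategoryTheory CategoryTheory.Limits

universe v u

lemma colimit_ι_congr {J : Type*} [Category J] {C : Type*} [Category C]
    (F : J ⥤ C) [HasColimit F] {j j' : J} (h : j = j') :
    colimit.ι F j = eqToHom (by rw [h]) ≫ colimit.ι F j' := by
  subst h; simp

/-- **General Colimit Decomposition Formula** (Peschke–Tholen, Theorem 4.4).
Given a lax cocone datum `(X_d, φᵘ)` over `Φ : D ⥤ Cat` with values in a cocomplete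
category `𝒳` (i.e. a `D`-shaped diagram in `Diag°(𝒳)` lying over `Φ`), a colimit cocone
`(K_d = c.ι.app d : Φ d ⥤ 𝒦 = c.pt)` of `Φ` in `Cat`, left Kan extensions
`L_d = Lan_{K_d} X_d` (with units `η_d`), the diagram `M : D ⥤ (𝒦 ⥤ 𝒳)` of the `L_d`
with transition maps induced by the Kan extension universal property, and the diagram
`G : D ⥤ 𝒳` of the colimits `colim X_d`, one has
`colim_𝒦 (colim_D M) ≅ colim_D G`, i.e. `colim_𝒦 X ≅ colim_{d ∈ D} colim_{Φ d} X_d`. -/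
theorem general_colimit_decomposition_formula
    {D : Type v} [SmallCategory D] (Φ : D ⥤ Cat.{v, v})
    {𝒳 : Type u} [Category.{v} 𝒳] [HasColimits 𝒳]
    (Xd : ∀ d : D, (Φ.obj d : Cat) ⥤ 𝒳)
    (φ : ∀ {d e : D} (u : d ⟶ e),
      Xd d ⟶ (Φ.map u : (Φ.obj d : Cat) ⟶ Φ.obj e).toFunctor ⋙ Xd e)
    (hunit : ∀ (d : D) (x : ↑(Φ.obj d)),
      (φ (𝟙 d)).app x = eqToHom (by rw [Φ.map_id]; rfl))
    (hcocycle : ∀ {d e f : D} (u : d ⟶ e) (v : e ⟶ f) (x : ↑(Φ.obj d)),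
      (φ (u ≫ v)).app x =
        (φ u).app x ≫ (φ v).app ((Φ.map u).toFunctor.obj x) ≫ eqToHom (by rw [Φ.map_comp]; rfl))
    (c : Cocone Φ) (hc : IsColimit c)
    (L : ∀ d : D, ↑c.pt ⥤ 𝒳)
    (η : ∀ d : D, Xd d ⟶ (c.ι.app d : (Φ.obj d : Cat) ⟶ c.pt).toFunctor ⋙ L d)
    [inst : ∀ d : D, (L d).IsLeftKanExtension (η d)]
    (M : D ⥤ (↑c.pt ⥤ 𝒳))
    (hMobj : ∀ d, M.obj d = L d)
    (hMmap : ∀ {d e : D} (u : d ⟶ e),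
      M.map u = eqToHom (hMobj d) ≫
        (L d).descOfIsLeftKanExtension (η d) (L e)
          (φ u ≫ Functor.whiskerLeft (Φ.map u : (Φ.obj d : Cat) ⟶ Φ.obj e).toFunctor (η e) ≫
            eqToHom (show
              (Φ.map u : (Φ.obj d : Cat) ⟶ Φ.obj e).toFunctor ⋙
                  ((c.ι.app e : (Φ.obj e : Cat) ⟶ c.pt).toFunctor ⋙ L e) =
                (c.ι.app d : (Φ.obj d : Cat) ⟶ c.pt).toFunctor ⋙ L e from by
              rw [← c.w u]; rfl)) ≫
        eqToHom (hMobj e).symm)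
    (G : D ⥤ 𝒳)
    (hGobj : ∀ d, G.obj d = colimit (Xd d))
    (hGmap : ∀ {d e : D} (u : d ⟶ e),
      G.map u = eqToHom (hGobj d) ≫ colimMap (φ u) ≫
        colimit.pre (Xd e) (Φ.map u : (Φ.obj d : Cat) ⟶ Φ.obj e).toFunctor ≫
        eqToHom (hGobj e).symm) :
    Nonempty (colimit (colimit M) ≅ colimit G) := by
  let iso : ∀ d, (M ⋙ colim).obj d ≅ G.obj d := fun d =>
    eqToIso (by dsimp; rw [hMobj d]) ≪≫
      (L d).colimitIsoOfIsLeftKanExtension (η d) ≪≫ eqToIso (hGobj d).symm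
  have key : ∀ {d e : D} (u : d ⟶ e),
      colim.map ((L d).descOfIsLeftKanExtension (η d) (L e)
          (φ u ≫ Functor.whiskerLeft (Φ.map u : (Φ.obj d : Cat) ⟶ Φ.obj e).toFunctor (η e) ≫
            eqToHom (show
              (Φ.map u : (Φ.obj d : Cat) ⟶ Φ.obj e).toFunctor ⋙
                  ((c.ι.app e : (Φ.obj e : Cat) ⟶ c.pt).toFunctor ⋙ L e) =
                (c.ι.app d : (Φ.obj d : Cat) ⟶ c.pt).toFunctor ⋙ L e from by
              rw [← c.w u]; rfl))) ≫
        ((L e).colimitIsoOfIsLeftKanExtension (η e)).hom =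
      ((L d).colimitIsoOfIsLeftKanExtension (η d)).hom ≫ colimMap (φ u) ≫
        colimit.pre (Xd e) (Φ.map u : (Φ.obj d : Cat) ⟶ Φ.obj e).toFunctor := by
    intro d e u
    rw [← Iso.inv_comp_eq]
    apply colimit.hom_ext
    intro x
    have ho : ((c.ι.app e : (Φ.obj e : Cat) ⟶ c.pt)).toFunctor.obj ((Φ.map u).toFunctor.obj x) =
        ((c.ι.app d : (Φ.obj d : Cat) ⟶ c.pt)).toFunctor.obj x := by
      have := c.w u
      exact Functor.congr_obj (congrArg (fun (F : (Φ.obj d : Cat) ⟶ c.pt) => F.toFunctor) this) x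
    rw [Functor.ι_colimitIsoOfIsLeftKanExtension_inv_assoc]
    dsimp only [colim_map]
    rw [ι_colimMap_assoc]
    rw [(L d).descOfIsLeftKanExtension_fac_app_assoc (η d)]
    simp only [NatTrans.comp_app, Functor.whiskerLeft_app, eqToHom_app, Category.assoc]
    rw [colimit_ι_congr (L e) ho.symm]
    simp [ho]
  have natiso : M ⋙ colim ≅ G := by
    refine NatIso.ofComponents iso (fun {d e} u => ?_)
    dsimp [iso]
    rw [hMmap u, hGmap u]
    simp only [← colim_map, Functor.map_comp, eqToHom_map, Category.assoc, eqToHom_trans,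
      eqToHom_trans_assoc, eqToHom_refl, Category.comp_id, Category.id_comp]
    rw [reassoc_of% (key u)]
    simp
  exact ⟨preservesColimitIso colim M ≪≫ HasColimit.isoOfNatIso natiso⟩
end

section
/- Let P : E ⥤ B be a functor that is both a Grothendieck fibration and a Grothendieck opfibration (a bifibration), and let D be a category. If B has limits of shape D and, for every object b of B, the fiber E_b of P at b has limits of shape D, then E has limits of shape D and P preserves limits of shape D. -/
open CategoryTheory CategoryTheory.Limits

universe w w' v₂ u₂ v₃ u₃

namespace DiagPaper

variable {E : Type u₂} [Category.{v₂} E] {B : Type u₃} [Category.{v₃} B]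

/-- `f : x ⟶ y` is a `P`-cartesian morphism: every `h : z ⟶ y` together with a
factorization `w` of `P h` through `P f` lifts uniquely. -/
def IsCartesianHom (P : E ⥤ B) {x y : E} (f : x ⟶ y) : Prop :=
  ∀ (z : E) (h : z ⟶ y) (w : P.obj z ⟶ P.obj x),
    w ≫ P.map f = P.map h → ∃! t : z ⟶ x, t ≫ f = h ∧ P.map t = w

/-- `P` is a (cloven) Grothendieck fibration: every `u : a ⟶ P y` admits a `P`-cartesian
lift at `y`. -/
def IsGFibration (P : E ⥤ B) : Prop :=
  ∀ (y : E) (a : B) (u : a ⟶ P.obj y),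
    ∃ (x : E) (f : x ⟶ y) (hx : P.obj x = a),
      IsCartesianHom P f ∧ P.map f = eqToHom hx ≫ u

/-! ### Auxiliary lemmas about opcartesian morphisms -/

/-- Unfolding of cartesianness of `e.op` for `Pᵒᵖ` into a statement about `P`:
`e` is `P`-opcartesian. -/
lemma opcart_unop {P : E ⥤ B} {z z' : E} {e : z ⟶ z'} (hc : IsCartesianHom P.op e.op) :
    ∀ (c : E) (h : z ⟶ c) (w : P.obj z' ⟶ P.obj c),
      P.map e ≫ w = P.map h → ∃! t : z' ⟶ c, e ≫ t = h ∧ P.map t = w := by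
  intro c h w hw
  obtain ⟨t, ⟨ht1, ht2⟩, huniq⟩ := hc (Opposite.op c) h.op w.op (by
    show w.op ≫ (P.map e).op = (P.map h).op
    rw [← op_comp, hw])
  refine ⟨t.unop, ⟨?_, ?_⟩, ?_⟩
  · exact congrArg Quiver.Hom.unop ht1
  · exact congrArg Quiver.Hom.unop ht2
  · intro t' ⟨h1, h2⟩
    have := huniq t'.op ⟨?_, ?_⟩
    · exact congrArg Quiver.Hom.unop this
    · exact congrArg Quiver.Hom.op h1
    · exact congrArg Quiver.Hom.op h2

/-- Unfolding of the opfibration condition: every `u : P z ⟶ a` admits an opcartesian lift. -/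
lemma opfib_lift {P : E ⥤ B} (hopfib : IsGFibration P.op) (z : E) (a : B)
    (u : P.obj z ⟶ a) :
    ∃ (z' : E) (e : z ⟶ z') (hz' : P.obj z' = a),
      IsCartesianHom P.op e.op ∧ P.map e = u ≫ eqToHom hz'.symm := by
  obtain ⟨x, f, hx, hcart, hf⟩ := hopfib (Opposite.op z) (Opposite.op a) u.op
  have hx' : P.obj x.unop = a := congrArg Opposite.unop hx
  refine ⟨x.unop, f.unop, hx', ?_, ?_⟩
  · simpa using hcart
  · have hf' : (P.map f.unop).op = eqToHom hx ≫ u.op := hf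
    apply Quiver.Hom.op_inj
    rw [hf', op_comp, eqToHom_op]

/-! ### Construction of the limit cone -/

section Construction

variable (P : E ⥤ B) {D : Type w} [Category.{w'} D] [HasLimitsOfShape D B]
variable (hfib : IsGFibration P) (F : D ⥤ E)

/-- The cartesian lift at `F.obj d` of the limit projection `limit (F ⋙ P) ⟶ P (F d)`:
the object part. -/
noncomputable def xo (d : D) : E :=
  (hfib (F.obj d) (limit (F ⋙ P)) (limit.π (F ⋙ P) d)).choose

/-- The cartesian lift: the morphism part. -/
noncomputable def fo (d : D) : xo P hfib F d ⟶ F.obj d :=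
  (hfib (F.obj d) (limit (F ⋙ P)) (limit.π (F ⋙ P) d)).choose_spec.choose

lemma hxo (d : D) : P.obj (xo P hfib F d) = limit (F ⋙ P) :=
  (hfib (F.obj d) (limit (F ⋙ P)) (limit.π (F ⋙ P) d)).choose_spec.choose_spec.choose

lemma carto (d : D) : IsCartesianHom P (fo P hfib F d) :=
  (hfib (F.obj d) (limit (F ⋙ P)) (limit.π (F ⋙ P) d)).choose_spec.choose_spec.choose_spec.1

lemma fo_map (d : D) :
    P.map (fo P hfib F d) = eqToHom (hxo P hfib F d) ≫ limit.π (F ⋙ P) d :=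
  (hfib (F.obj d) (limit (F ⋙ P)) (limit.π (F ⋙ P) d)).choose_spec.choose_spec.choose_spec.2

lemma gmap_cond {d d' : D} (φ : d ⟶ d') :
    eqToHom ((hxo P hfib F d).trans (hxo P hfib F d').symm) ≫ P.map (fo P hfib F d') =
      P.map (fo P hfib F d ≫ F.map φ) := by
  rw [P.map_comp, fo_map, fo_map, eqToHom_trans_assoc, Category.assoc]
  congr 1
  exact (limit.w (F ⋙ P) φ).symm

/-- The map in the fiber over the limit induced by `φ : d ⟶ d'`, obtained by
cartesianness of `fo d'`. -/
noncomputable def gmap {d d' : D} (φ : d ⟶ d') : xo P hfib F d ⟶ xo P hfib F d' :=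
  (carto P hfib F d' (xo P hfib F d) (fo P hfib F d ≫ F.map φ)
    (eqToHom ((hxo P hfib F d).trans (hxo P hfib F d').symm))
    (gmap_cond P hfib F φ)).choose

lemma gmap_fac {d d' : D} (φ : d ⟶ d') :
    gmap P hfib F φ ≫ fo P hfib F d' = fo P hfib F d ≫ F.map φ :=
  (carto P hfib F d' (xo P hfib F d) (fo P hfib F d ≫ F.map φ)
    (eqToHom ((hxo P hfib F d).trans (hxo P hfib F d').symm))
    (gmap_cond P hfib F φ)).choose_spec.1.1

lemma gmap_map {d d' : D} (φ : d ⟶ d') :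
    P.map (gmap P hfib F φ) = eqToHom ((hxo P hfib F d).trans (hxo P hfib F d').symm) :=
  (carto P hfib F d' (xo P hfib F d) (fo P hfib F d ≫ F.map φ)
    (eqToHom ((hxo P hfib F d).trans (hxo P hfib F d').symm))
    (gmap_cond P hfib F φ)).choose_spec.1.2

lemma gmap_uniq {d d' : D} (φ : d ⟶ d') (t : xo P hfib F d ⟶ xo P hfib F d')
    (h1 : t ≫ fo P hfib F d' = fo P hfib F d ≫ F.map φ)
    (h2 : P.map t = eqToHom ((hxo P hfib F d).trans (hxo P hfib F d').symm)) :
    t = gmap P hfib F φ :=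
  (carto P hfib F d' (xo P hfib F d) (fo P hfib F d ≫ F.map φ)
    (eqToHom ((hxo P hfib F d).trans (hxo P hfib F d').symm))
    (gmap_cond P hfib F φ)).choose_spec.2 t ⟨h1, h2⟩

/-- The diagram in the fiber over `limit (F ⋙ P)` induced by `F`. -/
noncomputable def Gdiag : D ⥤ P.Fiber (limit (F ⋙ P)) where
  obj d := ⟨xo P hfib F d, hxo P hfib F d⟩
  map {d d'} φ := ⟨gmap P hfib F φ,
    IsHomLift.of_fac' P (𝟙 _) (gmap P hfib F φ) (hxo P hfib F d) (hxo P hfib F d')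
      (by rw [gmap_map]; simp)⟩
  map_id d := by
    apply Subtype.ext
    refine (gmap_uniq P hfib F (𝟙 d) (𝟙 _) (by simp) (by simp)).symm
  map_comp {d d' d''} φ ψ := by
    apply Subtype.ext
    refine (gmap_uniq P hfib F (φ ≫ ψ) (gmap P hfib F φ ≫ gmap P hfib F ψ) ?_ ?_).symm
    · rw [Category.assoc, gmap_fac, ← Category.assoc, gmap_fac, Category.assoc, F.map_comp]
    · rw [P.map_comp, gmap_map, gmap_map, eqToHom_trans]

variable (hfibers : ∀ b : B, HasLimitsOfShape D (P.Fiber b))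

/-- The candidate limit cone for `F`. -/
noncomputable def limCone : Cone F :=
  haveI := hfibers (limit (F ⋙ P))
  { pt := (limit (Gdiag P hfib F)).1
    π :=
      { app := fun d => (limit.π (Gdiag P hfib F) d).1 ≫ fo P hfib F d
        naturality := fun d d' φ => by
          have h : (limit.π (Gdiag P hfib F) d).1 ≫ gmap P hfib F φ =
              (limit.π (Gdiag P hfib F) d').1 :=
            congrArg Subtype.val (limit.w (Gdiag P hfib F) φ)
          simp only [Functor.const_obj_obj, Functor.const_obj_map, Category.id_comp]
          erw [Category.assoc, ← gmap_fac P hfib F φ, ← Category.assoc, h]; rfl } }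

/-- The key property: the candidate cone is a limit cone, and its image under `P` is one too. -/
lemma limCone_isLimit (hopfib : IsGFibration P.op) :
    Nonempty (IsLimit (limCone P hfib F hfibers) ×
      IsLimit (P.mapCone (limCone P hfib F hfibers))) := by
  haveI := hfibers (limit (F ⋙ P))
  set G := Gdiag P hfib F with hGdef
  set C := limCone P hfib F hfibers with hCdef
  have hπapp : ∀ d : D, C.π.app d = (limit.π G d).1 ≫ fo P hfib F d := fun d => rfl
  have hPπ : ∀ d : D, P.map (C.π.app d) =
      eqToHom (limit G).2 ≫ limit.π (F ⋙ P) d := by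
    intro d
    haveI := (limit.π G d).2
    erw [hπapp d, P.map_comp, fo_map, IsHomLift.fac' P (𝟙 (limit (F ⋙ P))) (limit.π G d).1]
    simp; erw [eqToHom_trans_assoc]; rfl
  have h1 : ∀ s : Cone F, ∃! l : s.pt ⟶ C.pt, ∀ d, l ≫ C.π.app d = s.π.app d := by
    intro s
    set u := limit.lift (F ⋙ P) (P.mapCone s) with hu
    obtain ⟨z', e, hz', ecart, hemap⟩ := opfib_lift hopfib s.pt (limit (F ⋙ P)) u
    have ocart := opcart_unop ecart
    -- Step 1: factor the cone legs through the opcartesian lift `e`.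
    have hqex : ∀ d : D, ∃ t : z' ⟶ F.obj d, (e ≫ t = s.π.app d ∧
        P.map t = eqToHom hz' ≫ limit.π (F ⋙ P) d) ∧
        ∀ t' : z' ⟶ F.obj d, (e ≫ t' = s.π.app d ∧
          P.map t' = eqToHom hz' ≫ limit.π (F ⋙ P) d) → t' = t := by
      intro d
      refine ocart (F.obj d) (s.π.app d) _ ?_
      rw [hemap]
      simp [u]
    choose q hq hquniq using hqex
    -- Step 2: factor each `q d` through the cartesian lift `fo d`.
    have hrex : ∀ d : D, ∃ t : z' ⟶ xo P hfib F d, (t ≫ fo P hfib F d = q d ∧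
        P.map t = eqToHom (hz'.trans (hxo P hfib F d).symm)) ∧
        ∀ t' : z' ⟶ xo P hfib F d, (t' ≫ fo P hfib F d = q d ∧
          P.map t' = eqToHom (hz'.trans (hxo P hfib F d).symm)) → t' = t := by
      intro d
      refine carto P hfib F d z' (q d) _ ?_
      rw [fo_map, (hq d).2, eqToHom_trans_assoc]
    choose r hr hruniq using hrex
    -- Step 3: these form a cone over `G` in the fiber.
    have hqnat : ∀ {d d' : D} (φ : d ⟶ d'), q d ≫ F.map φ = q d' := by
      intro d d' φ
      refine hquniq d' _ ⟨?_, ?_⟩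
      · rw [← Category.assoc, (hq d).1, s.w φ]
      · rw [P.map_comp, (hq d).2, Category.assoc]
        congr 1
        exact limit.w (F ⋙ P) φ
    let sF : Cone G :=
      { pt := ⟨z', hz'⟩
        π :=
          { app := fun d => ⟨r d, IsHomLift.of_fac' P (𝟙 (limit (F ⋙ P))) (r d) hz'
              (hxo P hfib F d) (by rw [(hr d).2]; simp)⟩
            naturality := fun d d' φ => by
              apply Subtype.ext
              show 𝟙 z' ≫ r d' = r d ≫ gmap P hfib F φ
              rw [Category.id_comp]
              refine (hruniq d' _ ⟨?_, ?_⟩).symm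
              · rw [Category.assoc, gmap_fac, ← Category.assoc, (hr d).1, hqnat φ]
              · rw [P.map_comp, (hr d).2, gmap_map, eqToHom_trans] } }
    refine ⟨e ≫ (limit.lift G sF).1, ?_, ?_⟩
    · intro d
      have hm : (limit.lift G sF).1 ≫ (limit.π G d).1 = r d :=
        congrArg Subtype.val (limit.lift_π sF d)
      erw [hπapp d, Category.assoc, ← Category.assoc ((limit.lift G sF).1), hm,
        ← Category.assoc, Category.assoc, (hr d).1, (hq d).1]
    · intro l' hl'
      -- image of `l'` in the base is `u` (suitably adjusted)
      have hPl' : P.map l' = u ≫ eqToHom (limit G).2.symm := by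
        have h : P.map l' ≫ eqToHom (limit G).2 = u := by
          apply limit.hom_ext
          intro d
          erw [Category.assoc, ← hPπ d, ← P.map_comp, hl' d]
          simp [u]
        rw [← h, Category.assoc]
        erw [eqToHom_trans, eqToHom_refl, Category.comp_id]
      obtain ⟨tb, ⟨htb1, htb2⟩, _⟩ := ocart C.pt l' (eqToHom (hz'.trans (limit G).2.symm))
        (by rw [hemap, hPl']; simp; rfl)
      have htbq : ∀ d, tb ≫ C.π.app d = q d := by
        intro d
        refine hquniq d _ ⟨?_, ?_⟩
        · rw [← Category.assoc, htb1, hl' d]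
        · erw [P.map_comp, htb2, hPπ d, eqToHom_trans_assoc]
      have htbr : ∀ d, tb ≫ (limit.π G d).1 = r d := by
        intro d
        refine hruniq d _ ⟨?_, ?_⟩
        · erw [Category.assoc, ← hπapp d, htbq d]
        · haveI := (limit.π G d).2
          erw [P.map_comp, htb2, IsHomLift.fac' P (𝟙 (limit (F ⋙ P))) (limit.π G d).1]
          simp; erw [eqToHom_trans]
      have htbl : (⟨tb, IsHomLift.of_fac' P (𝟙 (limit (F ⋙ P))) tb hz' (limit G).2
          (by rw [htb2]; simp)⟩ : sF.pt ⟶ limit G) =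
          limit.lift G sF := by
        apply (limit.isLimit G).uniq sF
        intro d
        exact Subtype.ext (htbr d)
      rw [← htb1, ← htbl]
  refine ⟨⟨IsLimit.ofExistsUnique h1, ?_⟩⟩
  refine (limit.isLimit (F ⋙ P)).ofIsoLimit (Cones.ext (eqToIso (limit G).2.symm) ?_)
  intro d
  simp [hPπ d]; erw [eqToIso.hom, eqToHom_trans_assoc, eqToHom_refl, Category.id_comp]

end Construction

/-- **Peschke–Tholen, Theorem 9.4.**  Let `P : E ⥤ B` be a bifibration (a Grothendieck
fibration that is also an opfibration, i.e. `Pᵒᵖ` is a fibration).  If `B` and all fibers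
of `P` have limits of shape `D`, then `E` has limits of shape `D` and `P` preserves them. -/
theorem bifibration_lifts_limits (P : E ⥤ B)
    (hfib : IsGFibration P) (hopfib : IsGFibration P.op)
    (D : Type w) [Category.{w'} D]
    [HasLimitsOfShape D B]
    (hfibers : ∀ b : B, HasLimitsOfShape D (P.Fiber b)) :
    HasLimitsOfShape D E ∧ PreservesLimitsOfShape D P := by
  have key := fun F : D ⥤ E => limCone_isLimit P hfib F hfibers hopfib
  constructor
  · exact ⟨fun F => HasLimit.mk ⟨limCone P hfib F hfibers, (key F).some.1⟩⟩
  · exact ⟨fun {F} => preservesLimit_of_preserves_limit_cone (key F).some.1 (key F).some.2⟩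

end DiagPaper
end

section
/- Let P : E ⥤ B be a functor that is both a Grothendieck fibration and a Grothendieck opfibration (a bifibration), and let D be a category. If B has colimits of shape D and, for every object b of B, the fiber E_b of P at b has colimits of shape D, then E has colimits of shape D and P preserves colimits of shape D. -/
open CategoryTheory CategoryTheory.Limits

universe w w' v₂ u₂ v₃ u₃

namespace DiagPaper

variable {E : Type u₂} [Category.{v₂} E] {B : Type u₃} [Category.{v₃} B]

lemma opfib_lift_s17 (P : E ⥤ B) (hopfib : IsGFibration P.op) (x : E) (a : B) (u : P.obj x ⟶ a) :
    ∃ (y : E) (f : x ⟶ y) (hy : P.obj y = a),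
      (P.map f = u ≫ eqToHom hy.symm) ∧
      ∀ (z : E) (h : x ⟶ z) (w : P.obj y ⟶ P.obj z),
        P.map f ≫ w = P.map h → ∃! t : y ⟶ z, f ≫ t = h ∧ P.map t = w := by
  obtain ⟨Y, f, hY, hcart, hmap⟩ := hopfib (Opposite.op x) (Opposite.op a) u.op
  have hy : P.obj Y.unop = a := congrArg Opposite.unop hY
  refine ⟨Y.unop, f.unop, hy, ?_, ?_⟩
  · subst hy
    simpa using congrArg Quiver.Hom.unop hmap
  · intro z h w hw
    obtain ⟨t, ⟨ht1, ht2⟩, htu⟩ := hcart (Opposite.op z) h.op w.op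
      (congrArg Quiver.Hom.op hw)
    refine ⟨t.unop, ⟨congrArg Quiver.Hom.unop ht1, congrArg Quiver.Hom.unop ht2⟩, ?_⟩
    intro s ⟨hs1, hs2⟩
    have := htu s.op ⟨by simpa using congrArg Quiver.Hom.op hs1,
      by simpa using congrArg Quiver.Hom.op hs2⟩
    simpa using congrArg Quiver.Hom.unop this

lemma fiberHom_map (P : E ⥤ B) {b : B} {X Y : P.Fiber b} (ψ : X ⟶ Y) :
    P.map ψ.1 = eqToHom X.2 ≫ eqToHom Y.2.symm := by
  haveI := ψ.2
  simpa using IsHomLift.fac' P (𝟙 b) ψ.1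

lemma key (P : E ⥤ B) (hfib : IsGFibration P) (hopfib : IsGFibration P.op)
    {D : Type w} [Category.{w'} D] [HasColimitsOfShape D B]
    (hfibers : ∀ b : B, HasColimitsOfShape D (P.Fiber b)) (F : D ⥤ E) :
    ∃ c : Cocone F, Nonempty (IsColimit c) ∧ Nonempty (IsColimit (P.mapCocone c)) := by
  classical
  let K : D ⥤ B := F ⋙ P
  let b : B := colimit K
  choose G₀ η hG hmap hcocart using fun d => opfib_lift_s17 P hopfib (F.obj d) b (colimit.ι K d)
  have gspec : ∀ {d d' : D} (φ : d ⟶ d'),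
      ∃! t : G₀ d ⟶ G₀ d', (η d ≫ t = F.map φ ≫ η d' ∧
        P.map t = eqToHom (hG d) ≫ eqToHom (hG d').symm) := by
    intro d d' φ
    apply hcocart
    rw [hmap, Functor.map_comp, hmap]
    simp only [Category.assoc, eqToHom_trans_assoc, eqToHom_refl, Category.id_comp]
    rw [show P.map (F.map φ) = K.map φ from rfl, colimit.w_assoc]
  have gspec' : ∀ (d d' : D) (φ : d ⟶ d'), ∃ t : G₀ d ⟶ G₀ d',
      (η d ≫ t = F.map φ ≫ η d' ∧ P.map t = eqToHom (hG d) ≫ eqToHom (hG d').symm) ∧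
      ∀ y, (η d ≫ y = F.map φ ≫ η d' ∧
        P.map y = eqToHom (hG d) ≫ eqToHom (hG d').symm) → y = t := fun d d' φ => gspec φ
  choose gmap gprop using gspec'
  have gfac1 : ∀ (d d' : D) (φ : d ⟶ d'), η d ≫ gmap d d' φ = F.map φ ≫ η d' :=
    fun d d' φ => (gprop d d' φ).1.1
  have gfac2 : ∀ (d d' : D) (φ : d ⟶ d'),
      P.map (gmap d d' φ) = eqToHom (hG d) ≫ eqToHom (hG d').symm :=
    fun d d' φ => (gprop d d' φ).1.2
  have guniq : ∀ (d d' : D) (φ : d ⟶ d') (y : G₀ d ⟶ G₀ d'),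
      (η d ≫ y = F.map φ ≫ η d' ∧
        P.map y = eqToHom (hG d) ≫ eqToHom (hG d').symm) → y = gmap d d' φ :=
    fun d d' φ => (gprop d d' φ).2
  haveI := hfibers b
  have memb : ∀ {d d'} (φ : d ⟶ d'), P.IsHomLift (𝟙 b) (gmap d d' φ) := fun {d d'} φ =>
    IsHomLift.of_commsq P (𝟙 b) _ (hG d) (hG d') (by rw [gfac2]; simp)
  let G : D ⥤ P.Fiber b :=
    { obj := fun d => ⟨G₀ d, hG d⟩
      map := fun {d d'} φ => ⟨gmap d d' φ, memb φ⟩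
      map_id := fun d => by
        apply Subtype.ext
        exact (guniq d d (𝟙 d) (𝟙 (G₀ d)) ⟨by simp, by simp⟩).symm
      map_comp := fun {d d' d''} φ ψ => by
        apply Subtype.ext
        refine (guniq d d'' (φ ≫ ψ) (gmap d d' φ ≫ gmap d' d'' ψ) ⟨?_, ?_⟩).symm
        · calc η d ≫ gmap d d' φ ≫ gmap d' d'' ψ
              = (η d ≫ gmap d d' φ) ≫ gmap d' d'' ψ := by rw [Category.assoc]
            _ = (F.map φ ≫ η d') ≫ gmap d' d'' ψ := by rw [gfac1]
            _ = F.map φ ≫ (η d' ≫ gmap d' d'' ψ) := by rw [Category.assoc]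
            _ = F.map φ ≫ F.map ψ ≫ η d'' := by rw [gfac1]
            _ = F.map (φ ≫ ψ) ≫ η d'' := by rw [F.map_comp, Category.assoc]
        · rw [Functor.map_comp, gfac2, gfac2]; simp }
  let cpt : P.Fiber b := colimit G
  have hc : P.obj cpt.1 = b := cpt.2
  let cc : Cocone F :=
    { pt := cpt.1
      ι := { app := fun d => η d ≫ (colimit.ι G d).1
             naturality := fun d d' φ => by
               dsimp
               rw [Category.comp_id, ← Category.assoc, ← gfac1, Category.assoc]
               congr 1
               exact congrArg Subtype.val (colimit.w G φ) } }
  have hPleg : ∀ d, P.map (η d ≫ (colimit.ι G d).1) = colimit.ι K d ≫ eqToHom hc.symm := by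
    intro d
    rw [Functor.map_comp, hmap, fiberHom_map P (colimit.ι G d)]
    simp
  have main : ∀ s : Cocone F, ∃! t : cpt.1 ⟶ s.pt,
      ∀ d, (η d ≫ (colimit.ι G d).1) ≫ t = s.ι.app d := by
    intro s
    set v : b ⟶ P.obj s.pt := colimit.desc K (P.mapCocone s) with hv
    have hvfac : ∀ d, colimit.ι K d ≫ v = P.map (s.ι.app d) := fun d => colimit.ι_desc _ d
    obtain ⟨z', g, hz', gcart, hPg⟩ := hfib s.pt b v
    have τspec : ∀ d, ∃! τ : G₀ d ⟶ s.pt,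
        (η d ≫ τ = s.ι.app d ∧ P.map τ = eqToHom (hG d) ≫ v) := by
      intro d
      apply hcocart
      rw [hmap]
      simp only [Category.assoc, eqToHom_trans_assoc, eqToHom_refl, Category.id_comp]
      exact hvfac d
    have τspec' : ∀ d, ∃ τ : G₀ d ⟶ s.pt,
        (η d ≫ τ = s.ι.app d ∧ P.map τ = eqToHom (hG d) ≫ v) ∧
        ∀ y, (η d ≫ y = s.ι.app d ∧ P.map y = eqToHom (hG d) ≫ v) → y = τ := τspec
    choose τ τprop using τspec'
    have τ1 : ∀ d, η d ≫ τ d = s.ι.app d := fun d => (τprop d).1.1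
    have τ2 : ∀ d, P.map (τ d) = eqToHom (hG d) ≫ v := fun d => (τprop d).1.2
    have τu : ∀ d (y : G₀ d ⟶ s.pt),
        (η d ≫ y = s.ι.app d ∧ P.map y = eqToHom (hG d) ≫ v) → y = τ d :=
      fun d => (τprop d).2
    have σspec : ∀ d, ∃! σ : G₀ d ⟶ z',
        (σ ≫ g = τ d ∧ P.map σ = eqToHom (hG d) ≫ eqToHom hz'.symm) := by
      intro d
      apply gcart
      rw [hPg, τ2]
      simp
    have σspec' : ∀ d, ∃ σ : G₀ d ⟶ z',
        (σ ≫ g = τ d ∧ P.map σ = eqToHom (hG d) ≫ eqToHom hz'.symm) ∧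
        ∀ y, (y ≫ g = τ d ∧ P.map y = eqToHom (hG d) ≫ eqToHom hz'.symm) → y = σ := σspec
    choose σ σprop using σspec'
    have σ1 : ∀ d, σ d ≫ g = τ d := fun d => (σprop d).1.1
    have σ2 : ∀ d, P.map (σ d) = eqToHom (hG d) ≫ eqToHom hz'.symm := fun d => (σprop d).1.2
    have σu : ∀ d (y : G₀ d ⟶ z'),
        (y ≫ g = τ d ∧ P.map y = eqToHom (hG d) ≫ eqToHom hz'.symm) → y = σ d :=
      fun d => (σprop d).2
    have τcomp : ∀ {d d'} (φ : d ⟶ d'), gmap d d' φ ≫ τ d' = τ d := by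
      intro d d' φ
      apply τu
      refine ⟨?_, ?_⟩
      · rw [← Category.assoc, gfac1, Category.assoc, τ1, s.w]
      · rw [Functor.map_comp, gfac2, τ2]; simp
    have σcomp : ∀ {d d'} (φ : d ⟶ d'), gmap d d' φ ≫ σ d' = σ d := by
      intro d d' φ
      apply σu
      refine ⟨?_, ?_⟩
      · rw [Category.assoc, σ1, τcomp]
      · rw [Functor.map_comp, gfac2, σ2]; simp
    have membσ : ∀ d, P.IsHomLift (𝟙 b) (σ d) := fun d =>
      IsHomLift.of_commsq P (𝟙 b) _ (hG d) hz' (by rw [σ2]; simp)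
    let sc : Cocone G :=
      { pt := ⟨z', hz'⟩
        ι := { app := fun d => ⟨σ d, membσ d⟩
               naturality := fun d d' φ => by
                 apply Subtype.ext
                 exact (σcomp φ).trans (Category.comp_id _).symm } }
    set m := colimit.desc G sc with hm
    have hmfac : ∀ d, (colimit.ι G d).1 ≫ m.1 = σ d := by
      intro d
      exact congrArg Subtype.val (colimit.ι_desc sc d)
    refine ⟨m.1 ≫ g, ?_, ?_⟩
    · intro d
      calc (η d ≫ (colimit.ι G d).1) ≫ m.1 ≫ g
          = η d ≫ ((colimit.ι G d).1 ≫ m.1) ≫ g := by simp only [Category.assoc]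
        _ = η d ≫ σ d ≫ g := by rw [hmfac]
        _ = η d ≫ τ d := by rw [σ1]
        _ = s.ι.app d := τ1 d
    · intro t ht
      have hPt : P.map t = eqToHom hc ≫ v := by
        have h0 : eqToHom hc.symm ≫ P.map t = v := by
          apply colimit.hom_ext
          intro d
          rw [← Category.assoc, ← hPleg d, ← Functor.map_comp, ht d, hvfac d]
        rw [← h0]; simp
      obtain ⟨t', ⟨ht'g, hPt'⟩, t'u⟩ := gcart cpt.1 t (eqToHom hc ≫ eqToHom hz'.symm)
        (by rw [hPg, hPt]; simp)
      have memt' : P.IsHomLift (𝟙 b) t' :=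
        IsHomLift.of_commsq P (𝟙 b) _ hc hz' (by rw [hPt']; simp)
      have hι : ∀ d, (colimit.ι G d).1 ≫ t' = σ d := by
        intro d
        apply σu
        refine ⟨?_, ?_⟩
        · have h1 : (colimit.ι G d).1 ≫ t = τ d := by
            apply τu
            refine ⟨?_, ?_⟩
            · rw [← Category.assoc]; exact ht d
            · rw [Functor.map_comp, fiberHom_map P (colimit.ι G d), hPt]; simp
          rw [Category.assoc, ht'g, h1]
        · rw [Functor.map_comp, fiberHom_map P (colimit.ι G d), hPt']; simp
      have hEq : (⟨t', memt'⟩ : cpt ⟶ sc.pt) = colimit.desc G sc := by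
        refine (colimit.isColimit G).uniq sc _ fun d => ?_
        apply Subtype.ext
        show (colimit.ι G d).1 ≫ t' = σ d
        exact hι d
      rw [← ht'g, show t' = m.1 from congrArg Subtype.val hEq]
  have main' : ∀ s : Cocone F, ∃ t : cpt.1 ⟶ s.pt,
      (∀ d, (η d ≫ (colimit.ι G d).1) ≫ t = s.ι.app d) ∧
      ∀ y, (∀ d, (η d ≫ (colimit.ι G d).1) ≫ y = s.ι.app d) → y = t := main
  choose desc dprop using main'
  have hfac : ∀ (s : Cocone F) d, (η d ≫ (colimit.ι G d).1) ≫ desc s = s.ι.app d :=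
    fun s => (dprop s).1
  have huniq : ∀ (s : Cocone F) (y : cpt.1 ⟶ s.pt),
      (∀ d, (η d ≫ (colimit.ι G d).1) ≫ y = s.ι.app d) → y = desc s :=
    fun s => (dprop s).2
  have colim : IsColimit cc :=
    { desc := fun s => desc s
      fac := fun s d => hfac s d
      uniq := fun s t ht => huniq s t ht }
  have pcolim : IsColimit (P.mapCocone cc) := by
    refine IsColimit.ofIsoColimit (colimit.isColimit K) (Cocones.ext (eqToIso hc.symm) ?_)
    intro d
    exact (hPleg d).symm
  exact ⟨cc, ⟨colim⟩, ⟨pcolim⟩⟩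

/-- **Peschke–Tholen, Corollary 9.5.**  Let `P : E ⥤ B` be a bifibration (a Grothendieck
fibration that is also an opfibration, i.e. `Pᵒᵖ` is a fibration).  If `B` and all fibers
of `P` have colimits of shape `D`, then `E` has colimits of shape `D` and `P` preserves
them. -/
theorem bifibration_lifts_colimits (P : E ⥤ B)
    (hfib : IsGFibration P) (hopfib : IsGFibration P.op)
    (D : Type w) [Category.{w'} D]
    [HasColimitsOfShape D B]
    (hfibers : ∀ b : B, HasColimitsOfShape D (P.Fiber b)) :
    HasColimitsOfShape D E ∧ PreservesColimitsOfShape D P := by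
  have H := fun F : D ⥤ E => key P hfib hopfib hfibers F
  refine ⟨⟨fun F => HasColimit.mk ⟨(H F).choose, (H F).choose_spec.1.some⟩⟩, ⟨fun {F} => ?_⟩⟩
  exact preservesColimit_of_preserves_colimit_cocone (H F).choose_spec.1.some
    (H F).choose_spec.2.some


end DiagPaper
end

section
/- (The classifying split cofibration.) Let B be a small category and Φ : B ⥤ Cat a functor. Consider the commutative square whose top arrow is the canonical functor Grothendieck Φ ⥤ Grothendieck (𝟭 Cat) induced by Φ (sending (b, x) to (Φ b, x) and (u, f) to ((Φ u), f)), whose left arrow is Grothendieck.forget Φ, whose right arrow is Grothendieck.forget (𝟭 Cat), and whose bottom arrow is Φ : B ⥤ Cat. This square is a pullback square of categories: the induced comparison functor from Grothendieck Φ to the strict pullback category — whose objects are pairs (b, p) with b an object of B and p an object of Grothendieck (𝟭 Cat) with (Grothendieck.forget (𝟭 Cat)).obj p = Φ b, and whose morphisms are pairs of morphisms agreeing under Φ and the forgetful functor — is an isomorphism of categories. -/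
open CategoryTheory

universe v u

namespace DiagPaper

variable {B : Type v} [SmallCategory B]

/-- The canonical functor `Grothendieck Φ ⥤ Grothendieck (𝟭 Cat)` induced by `Φ`,
sending `(b, x)` to `(Φ b, x)` and `(u, f)` to `(Φ u, f)`. -/
def toLaxPointed (Φ : B ⥤ Cat.{v, v}) :
    Grothendieck Φ ⥤ Grothendieck (𝟭 Cat.{v, v}) where
  obj X := ⟨Φ.obj X.base, X.fiber⟩
  map {X Y} f := ⟨Φ.map f.base, f.fiber⟩
  map_id X := by
    fapply Grothendieck.ext
    · simp
    · simp
      exact eqToHom_trans _ _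
  map_comp f g := by
    fapply Grothendieck.ext
    · simp
    · simp
      erw [eqToHom_trans_assoc]

variable (Φ : B ⥤ Cat.{v, v})

/-- The strict pullback category of `Φ : B ⥤ Cat` and
`Grothendieck.forget (𝟭 Cat) : Grothendieck (𝟭 Cat) ⥤ Cat`. -/
structure StrictPB where
  pt : B
  laxPt : Grothendieck (𝟭 Cat.{v, v})
  over' : (Grothendieck.forget (𝟭 Cat.{v, v})).obj laxPt = Φ.obj pt

variable {Φ}

/-- Morphisms of the strict pullback: pairs of morphisms agreeing under `Φ` and the
forgetful functor. -/
structure StrictPBHom (A A' : StrictPB Φ) where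
  u : A.pt ⟶ A'.pt
  ψ : A.laxPt ⟶ A'.laxPt
  agree : (Grothendieck.forget (𝟭 Cat.{v, v})).map ψ =
    eqToHom A.over' ≫ Φ.map u ≫ eqToHom A'.over'.symm

theorem StrictPBHom.ext' {A A' : StrictPB Φ} {f g : StrictPBHom A A'}
    (hu : f.u = g.u) (hψ : f.ψ = g.ψ) : f = g := by
  cases f; cases g
  dsimp only at hu hψ
  subst hu; subst hψ
  rfl

instance : Category (StrictPB Φ) where
  Hom := StrictPBHom
  id A := ⟨𝟙 A.pt, 𝟙 A.laxPt, by simp; rfl⟩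
  comp f g := ⟨f.u ≫ g.u, f.ψ ≫ g.ψ, by
    rw [Functor.map_comp, f.agree, g.agree]
    simp⟩
  id_comp f := StrictPBHom.ext' (Category.id_comp _) (Category.id_comp _)
  comp_id f := StrictPBHom.ext' (Category.comp_id _) (Category.comp_id _)
  assoc f g h := StrictPBHom.ext' (Category.assoc _ _ _) (Category.assoc _ _ _)

/-- First projection of the strict pullback. -/
def strictPBFst : StrictPB Φ ⥤ B where
  obj A := A.pt
  map f := f.u

/-- Second projection of the strict pullback. -/
def strictPBSnd : StrictPB Φ ⥤ Grothendieck (𝟭 Cat.{v, v}) where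
  obj A := A.laxPt
  map f := f.ψ

lemma StrictPBHom.base_eq {A A' : StrictPB Φ} (f : StrictPBHom A A') :
    f.ψ.base ≫ eqToHom A'.over' = eqToHom A.over' ≫ Φ.map f.u := by
  have h : f.ψ.base = eqToHom A.over' ≫ Φ.map f.u ≫ eqToHom A'.over'.symm := f.agree
  have h2 := congrArg (· ≫ eqToHom A'.over') f.agree
  simp only [Category.assoc, eqToHom_trans, eqToHom_refl, Category.comp_id] at h2
  exact h2

lemma StrictPB.overB (A : StrictPB Φ) : A.laxPt.base = Φ.obj A.pt := A.over'

lemma StrictPBHom.obj_eq {A A' : StrictPB Φ} (f : StrictPBHom A A') (x : A.laxPt.base) :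
    (Φ.map f.u).toFunctor.obj ((eqToHom A.overB).toFunctor.obj x) = (eqToHom A'.overB).toFunctor.obj (f.ψ.base.toFunctor.obj x) := by
  have := Functor.congr_obj (congrArg Cat.Hom.toFunctor (StrictPBHom.base_eq f)) x
  exact this.symm

@[simp] lemma id_ψ (A : StrictPB Φ) : StrictPBHom.ψ (𝟙 A) = 𝟙 A.laxPt := rfl
@[simp] lemma id_u (A : StrictPB Φ) : StrictPBHom.u (𝟙 A) = 𝟙 A.pt := rfl
@[simp] lemma comp_ψ {A A' A'' : StrictPB Φ} (f : A ⟶ A') (g : A' ⟶ A'') :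
    StrictPBHom.ψ (f ≫ g) = f.ψ ≫ g.ψ := rfl
@[simp] lemma comp_u {A A' A'' : StrictPB Φ} (f : A ⟶ A') (g : A' ⟶ A'') :
    StrictPBHom.u (f ≫ g) = f.u ≫ g.u := rfl

/-- The comparison functor into the strict pullback. -/
def Cmp (Φ : B ⥤ Cat.{v, v}) : Grothendieck Φ ⥤ StrictPB Φ where
  obj X := ⟨X.base, ⟨Φ.obj X.base, X.fiber⟩, rfl⟩
  map {X Y} f := ⟨f.base, (toLaxPointed Φ).map f, by simp [toLaxPointed]; rfl⟩
  map_id X := StrictPBHom.ext' rfl ((toLaxPointed Φ).map_id X)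
  map_comp f g := StrictPBHom.ext' rfl ((toLaxPointed Φ).map_comp f g)

lemma eqToHom_comp_aux1 {D : Type*} [Category D] {a b c d : D} (p : a = b) (M : b ⟶ c)
    (N : c ⟶ d) (q : c = c) : (eqToHom p ≫ M) ≫ N = ((eqToHom p ≫ M) ≫ eqToHom q) ≫ N := by
  simp

lemma eqToHom_comp_aux2 {D : Type*} [Category D] {a b c : D} (p : a = b) (q : b = a)
    (M : a ⟶ c) : eqToHom p ≫ eqToHom q ≫ M = M := by
  simp

lemma eqToHom_comp_aux3 {C D : Type*} [Category C] [Category D] (G : C ⥤ D) {x y : C}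
    (r : x = y) {a b t : D} (p1 : a = b) (p2 : b = G.obj y) (p3 : a = G.obj x)
    (M : G.obj y ⟶ t) (p4 : t = t) :
    eqToHom p1 ≫ eqToHom p2 ≫ M = eqToHom p3 ≫ G.map (eqToHom r) ≫ M ≫ eqToHom p4 := by
  simp [eqToHom_map]

/-- The inverse of the comparison functor. -/
def Inv (Φ : B ⥤ Cat.{v, v}) : StrictPB Φ ⥤ Grothendieck Φ where
  obj A := ⟨A.pt, (eqToHom A.overB).toFunctor.obj A.laxPt.fiber⟩
  map {A A'} f :=
    ⟨f.u, eqToHom (StrictPBHom.obj_eq f A.laxPt.fiber) ≫ (eqToHom A'.overB).toFunctor.map f.ψ.fiber⟩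
  map_id A := by
    rcases A with ⟨pt, ⟨Cb, fib⟩, ho⟩
    dsimp [Grothendieck.forget] at ho
    subst ho
    refine Grothendieck.ext _ _ rfl ?_
    simp
    erw [eqToHom_trans, eqToHom_trans]
  map_comp {A A' A''} f g := by
    rcases A with ⟨pt, ⟨Cb, fib⟩, ho⟩
    rcases A' with ⟨pt', ⟨Cb', fib'⟩, ho'⟩
    rcases A'' with ⟨pt'', ⟨Cb'', fib''⟩, ho''⟩
    dsimp [Grothendieck.forget] at ho ho' ho''
    subst ho ho' ho''
    rcases f with ⟨u, ⟨fb, ff⟩, hf⟩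
    rcases g with ⟨w, ⟨gb, gf⟩, hg⟩
    simp at hf hg
    subst hf hg
    refine Grothendieck.ext _ _ rfl ?_
    simp
    erw [eqToHom_map]
    simp only [← Category.assoc]
    erw [eqToHom_trans, eqToHom_trans]
    exact eqToHom_comp_aux1 _ _ _ _

lemma eqToHom_u {A A' : StrictPB Φ} (h : A = A') :
    (eqToHom h).u = eqToHom (by rw [h]) := by subst h; rfl

lemma eqToHom_ψ {A A' : StrictPB Φ} (h : A = A') :
    (eqToHom h).ψ = eqToHom (by rw [h]) := by subst h; rfl

/-- **Peschke–Tholen, Theorem 9.10 (the classifying split cofibration).**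
For every small-fibred split cofibration, i.e. every `Grothendieck.forget Φ` with
`Φ : B ⥤ Cat`, the commutative square formed by the canonical functor
`Grothendieck Φ ⥤ Grothendieck (𝟭 Cat)`, the two forgetful functors, and `Φ` is a strict
pullback of categories: the induced comparison functor into the strict pullback category
is an isomorphism of categories. -/
theorem classifying_split_cofibration_pullback (Φ : B ⥤ Cat.{v, v}) :
    toLaxPointed Φ ⋙ Grothendieck.forget (𝟭 Cat.{v, v}) = Grothendieck.forget Φ ⋙ Φ ∧
    ∃ (Cmp : Grothendieck Φ ⥤ StrictPB Φ) (Inv : StrictPB Φ ⥤ Grothendieck Φ),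
      Cmp ⋙ strictPBFst = Grothendieck.forget Φ ∧
      Cmp ⋙ strictPBSnd = toLaxPointed Φ ∧
      Cmp ⋙ Inv = 𝟭 _ ∧ Inv ⋙ Cmp = 𝟭 _ := by
  refine ⟨rfl, Cmp Φ, Inv Φ, rfl, rfl, ?_, ?_⟩
  · refine CategoryTheory.Functor.ext (fun X => rfl) ?_
    intro X Y f
    simp only [eqToHom_refl, Category.comp_id, Category.id_comp, Functor.id_map]
    erw [eqToHom_refl, eqToHom_refl, Category.id_comp, Category.comp_id]
    refine Grothendieck.ext _ _ rfl ?_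
    simp [Cmp, Inv, toLaxPointed]
    exact eqToHom_comp_aux2 _ _ _
  · have hobj : ∀ A : StrictPB Φ, (Inv Φ ⋙ Cmp Φ).obj A = A := by
      rintro ⟨pt, ⟨Cb, fib⟩, ho⟩
      dsimp [Grothendieck.forget] at ho
      subst ho
      rfl
    refine CategoryTheory.Functor.ext hobj ?_
    rintro ⟨pt, ⟨Cb, fib⟩, ho⟩ ⟨pt', ⟨Cb', fib'⟩, ho'⟩ f
    dsimp [Grothendieck.forget] at ho ho'
    subst ho; subst ho'
    apply StrictPBHom.ext'
    · exact (by simp : f.u = 𝟙 _ ≫ f.u ≫ 𝟙 _)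
    · refine Grothendieck.ext _ _ ?_ ?_
      · exact f.agree.symm
      · rcases f with ⟨u, ⟨fb, ff⟩, hf⟩
        simp at hf
        subst hf
        simp [Cmp, Inv, toLaxPointed, eqToHom_ψ]
        exact eqToHom_comp_aux3 (Φ.map u).toFunctor rfl _ _ _ _ rfl

end DiagPaper
end
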